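/- arXiv:math/0511693 — 6 statements merged into one kernel-verified Lean document; each statement's English description precedes it below -/
import Mathlib

section
/- Let μ be a nonzero complex number with |μ−1| ≤ 1, let β ∈ [0,1), let σ be a probability measure on the unit circle, and define f(z) = (1−z)^μ · exp(−μ(1−β) ∫_{|ζ|=1} log(1−z ζ̄) dσ(ζ)) for z in the open unit disk (using the principal branch of log, which is well defined since Re(1−zζ̄) > 0). Then for all z in the open unit disk, Re( (2/μ)·(z f'(z)/f(z)) + (1+z)/(1−z) ) > β. -/
open Complex MeasureTheory Metric Filter

/-!
Taking the logarithmic derivative of `f`,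
`(2/μ) z f'(z)/f(z) + (1+z)/(1-z) = β + (1-β) ∫ (1 + z ζ̄)/(1 - z ζ̄) dσ(ζ)`.
The Herglotz kernel `(1+w)/(1-w)` has real part `(1-|w|²)/|1-w|² > 0` on the unit disk and `σ`
is a probability measure, so the real part of the right-hand side exceeds `β`.
-/

theorem one_sub_mem_slitPlane {w : ℂ} (hw : ‖w‖ < 1) : 1 - w ∈ slitPlane := by
  simpa [sub_eq_add_neg] using mem_slitPlane_of_norm_lt_one (z := -w) (by rwa [norm_neg])

theorem re_one_add_div_one_sub_pos {w : ℂ} (hw : ‖w‖ < 1) : 0 < ((1 + w) / (1 - w)).re := by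
  have hnum : 0 < 1 - normSq w := by
    rw [normSq_eq_norm_sq]; nlinarith [norm_nonneg w]
  rw [div_re, ← add_div]
  refine div_pos ?_ (normSq_pos.2 (slitPlane_ne_zero (one_sub_mem_slitPlane hw)))
  simp only [add_re, one_re, sub_re, add_im, one_im, sub_im, normSq_apply] at hnum ⊢
  nlinarith

theorem norm_mul_lt_one {x a : ℂ} (hx : ‖x‖ < 1) (ha : ‖a‖ ≤ 1) : ‖x * a‖ < 1 := by
  rw [norm_mul]; nlinarith [norm_nonneg x, norm_nonneg a]

theorem norm_div_one_sub_mul_le {x a : ℂ} (hx : ‖x‖ < 1) (ha : ‖a‖ ≤ 1) :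
    ‖a / (1 - x * a)‖ ≤ (1 - ‖x‖)⁻¹ := by
  have hxa : ‖x * a‖ ≤ ‖x‖ := by
    rw [norm_mul]; exact mul_le_of_le_one_right (norm_nonneg x) ha
  have hden : 1 - ‖x‖ ≤ ‖1 - x * a‖ := by
    have := norm_sub_norm_le (1 : ℂ) (x * a)
    rw [norm_one] at this
    linarith
  rw [norm_div, div_eq_mul_inv, ← one_mul (1 - ‖x‖)⁻¹]
  gcongr

theorem continuous_div_one_sub_mul {X : Type*} [TopologicalSpace X] {a : X → ℂ}
    (ha : Continuous a) (ha1 : ∀ x, ‖a x‖ ≤ 1) {z : ℂ} (hz : ‖z‖ < 1) :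
    Continuous (fun x => -a x / (1 - z * a x)) :=
  ha.neg.div (continuous_const.sub (continuous_const.mul ha))
    fun x => slitPlane_ne_zero (one_sub_mem_slitPlane (norm_mul_lt_one hz (ha1 x)))

theorem re_integral_pos {X : Type*} [MeasurableSpace X] {σ : Measure X} [NeZero σ]
    {g : X → ℂ} (hg : Integrable g σ) (hpos : ∀ x, 0 < (g x).re) : 0 < (∫ x, g x ∂σ).re := by
  rw [show (∫ x, g x ∂σ).re = ∫ x, (g x).re ∂σ from (integral_re hg).symm,
    integral_pos_iff_support_of_nonneg (fun x => (hpos x).le) hg.re,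
    Function.support_eq_univ fun x => (hpos x).ne', Measure.measure_univ_pos]
  exact NeZero.ne σ

section HerglotzIntegral

variable {X : Type*} [TopologicalSpace X] [CompactSpace X] [MeasurableSpace X]
  [OpensMeasurableSpace X] {σ : Measure X} [IsFiniteMeasure σ] {a : X → ℂ}

theorem hasDerivAt_integral_log_one_sub_mul (ha : Continuous a) (ha1 : ∀ x, ‖a x‖ ≤ 1) {z : ℂ}
    (hz : ‖z‖ < 1) :
    HasDerivAt (fun w => ∫ x, log (1 - w * a x) ∂σ) (∫ x, -a x / (1 - z * a x) ∂σ) z := by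
  set r := (1 + ‖z‖) / 2 with hr_def
  have hr : r < 1 := by linarith
  have hzr : z ∈ ball (0 : ℂ) r := mem_ball_zero_iff.2 (by linarith)
  have hslit : ∀ w ∈ ball (0 : ℂ) r, ∀ x, 1 - w * a x ∈ slitPlane := fun w hw x =>
    one_sub_mem_slitPlane (norm_mul_lt_one ((mem_ball_zero_iff.1 hw).trans hr) (ha1 x))
  have hlog : ∀ w ∈ ball (0 : ℂ) r, Continuous fun x => log (1 - w * a x) := fun w hw =>
    (continuous_const.sub (continuous_const.mul ha)).clog (hslit w hw)
  refine (hasDerivAt_integral_of_dominated_loc_of_deriv_le (bound := fun _ => (1 - r)⁻¹)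
    (F := fun w x => log (1 - w * a x)) (F' := fun w x => -a x / (1 - w * a x))
    (isOpen_ball.mem_nhds hzr) ?_ ?_
    (continuous_div_one_sub_mul ha ha1 hz).aestronglyMeasurable ?_ (integrable_const _) ?_).2
  · filter_upwards [isOpen_ball.mem_nhds hzr] with w hw
    exact (hlog w hw).aestronglyMeasurable
  · exact (hlog z hzr).integrable_of_hasCompactSupport (HasCompactSupport.of_compactSpace _)
  · refine ae_of_all _ fun x w hw => ?_
    have hw' : ‖w‖ < r := mem_ball_zero_iff.1 hw
    calc ‖-a x / (1 - w * a x)‖ ≤ (1 - ‖w‖)⁻¹ := by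
          rw [neg_div, norm_neg]; exact norm_div_one_sub_mul_le (hw'.trans hr) (ha1 x)
      _ ≤ (1 - r)⁻¹ := by gcongr
  · refine ae_of_all _ fun x w hw => ?_
    simpa [neg_div] using (((hasDerivAt_id w).mul_const (a x)).const_sub 1).clog (hslit w hw x)

theorem integral_one_add_mul_div_one_sub_mul [IsProbabilityMeasure σ] (ha : Continuous a)
    (ha1 : ∀ x, ‖a x‖ ≤ 1) {z : ℂ} (hz : ‖z‖ < 1) :
    ∫ x, (1 + z * a x) / (1 - z * a x) ∂σ = 1 - 2 * z * ∫ x, -a x / (1 - z * a x) ∂σ := by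
  have hint : Integrable (fun x => -a x / (1 - z * a x)) σ :=
    (continuous_div_one_sub_mul ha ha1 hz).integrable_of_hasCompactSupport
      (HasCompactSupport.of_compactSpace _)
  calc ∫ x, (1 + z * a x) / (1 - z * a x) ∂σ
      = ∫ x, (1 - 2 * z * (-a x / (1 - z * a x))) ∂σ := by
        refine integral_congr_ae (ae_of_all _ fun x => ?_)
        have := slitPlane_ne_zero (one_sub_mem_slitPlane (norm_mul_lt_one hz (ha1 x)))
        field_simp
        ring
    _ = 1 - 2 * z * ∫ x, -a x / (1 - z * a x) ∂σ := by
        rw [integral_sub (integrable_const 1) (hint.const_mul _), integral_const_mul]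
        simp

theorem re_integral_one_add_mul_div_one_sub_mul_pos [NeZero σ] (ha : Continuous a)
    (ha1 : ∀ x, ‖a x‖ ≤ 1) {z : ℂ} (hz : ‖z‖ < 1) :
    0 < (∫ x, (1 + z * a x) / (1 - z * a x) ∂σ).re := by
  have hcont : Continuous fun x => (1 + z * a x) / (1 - z * a x) :=
    (continuous_const.add (continuous_const.mul ha)).div
      (continuous_const.sub (continuous_const.mul ha))
      fun x => slitPlane_ne_zero (one_sub_mem_slitPlane (norm_mul_lt_one hz (ha1 x)))
  exact re_integral_pos
    (hcont.integrable_of_hasCompactSupport (HasCompactSupport.of_compactSpace _))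
    fun x => re_one_add_div_one_sub_pos (norm_mul_lt_one hz (ha1 x))

end HerglotzIntegral

theorem hasDerivAt_one_sub_cpow_mul_exp {μ c L' z : ℂ} {L : ℂ → ℂ} (hL : HasDerivAt L L' z)
    (hz : 1 - z ∈ slitPlane) :
    HasDerivAt (fun w => (1 - w) ^ μ * exp (c * L w))
      ((1 - z) ^ μ * exp (c * L z) * (-μ / (1 - z) + c * L')) z := by
  refine (((hasDerivAt_id z).const_sub 1).cpow_const hz |>.mul (hL.const_mul c).cexp).congr_deriv ?_
  rw [id, cpow_sub _ _ (slitPlane_ne_zero hz), cpow_one]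
  field_simp

theorem stmt0_general (μ : ℂ) (hμ0 : μ ≠ 0)
    (β : ℝ) (hβ1 : β < 1)
    (σ : Measure (sphere (0:ℂ) 1)) [IsProbabilityMeasure σ]
    (f : ℂ → ℂ)
    (hf : ∀ z ∈ ball (0 : ℂ) 1,
      f z = (1 - z) ^ μ *
        Complex.exp (-μ * (1 - (β : ℂ)) *
          ∫ ζ : sphere (0:ℂ) 1, Complex.log (1 - z * (starRingEnd ℂ) (ζ : ℂ)) ∂σ)) :
    ∀ z ∈ ball (0 : ℂ) 1,
      (β : ℝ) < ((2 / μ) * (z * deriv f z / f z) + (1 + z) / (1 - z)).re := by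
  intro z hz
  have hz1 : ‖z‖ < 1 := mem_ball_zero_iff.1 hz
  have ha : Continuous fun ζ : sphere (0 : ℂ) 1 => (starRingEnd ℂ) (ζ : ℂ) :=
    continuous_conj.comp continuous_subtype_val
  have ha1 : ∀ ζ : sphere (0 : ℂ) 1, ‖(starRingEnd ℂ) (ζ : ℂ)‖ ≤ 1 := by simp
  have hslit := one_sub_mem_slitPlane hz1
  have hf' := (hasDerivAt_one_sub_cpow_mul_exp (μ := μ) (c := -μ * (1 - (β : ℂ)))
    (hasDerivAt_integral_log_one_sub_mul (σ := σ) ha ha1 hz1) hslit).congr_of_eventuallyEq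
      (eventually_of_mem (isOpen_ball.mem_nhds hz) hf)
  rw [← hf z hz] at hf'
  have hfz : f z ≠ 0 := by
    rw [hf z hz]
    exact mul_ne_zero (by simp [cpow_eq_zero_iff, slitPlane_ne_zero hslit]) (exp_ne_zero _)
  have key : (2 / μ) * (z * deriv f z / f z) + (1 + z) / (1 - z) =
      β + ((1 - β : ℝ) : ℂ) * ∫ ζ : sphere (0 : ℂ) 1,
        (1 + z * (starRingEnd ℂ) (ζ : ℂ)) / (1 - z * (starRingEnd ℂ) (ζ : ℂ)) ∂σ := by
    rw [hf'.deriv, integral_one_add_mul_div_one_sub_mul ha ha1 hz1]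
    have := slitPlane_ne_zero hslit
    push_cast
    field_simp
    ring
  have hpos := re_integral_one_add_mul_div_one_sub_mul_pos (σ := σ) ha ha1 hz1
  rw [key, add_re, ofReal_re, re_ofReal_mul]
  have := mul_pos (sub_pos.2 hβ1) hpos
  linarith

theorem stmt0 (μ : ℂ) (hμ0 : μ ≠ 0) (hμ : ‖μ - 1‖ ≤ 1)
    (β : ℝ) (hβ : 0 ≤ β) (hβ1 : β < 1)
    (σ : Measure (sphere (0:ℂ) 1)) [IsProbabilityMeasure σ]
    (f : ℂ → ℂ)
    (hf : ∀ z ∈ ball (0 : ℂ) 1,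
      f z = (1 - z) ^ μ *
        Complex.exp (-μ * (1 - (β : ℂ)) *
          ∫ ζ : sphere (0:ℂ) 1, Complex.log (1 - z * (starRingEnd ℂ) (ζ : ℂ)) ∂σ)) :
    ∀ z ∈ ball (0 : ℂ) 1,
      (β : ℝ) < ((2 / μ) * (z * deriv f z / f z) + (1 + z) / (1 - z)).re :=
  stmt0_general μ hμ0 β hβ1 σ f hf
end

section
/- Let β ∈ [0,1) and let σ be a probability measure on the unit circle. Then for every z in the open unit disk there exists λ ∈ ℂ with |λ| ≤ 1 such that exp((1−β)∫_{|ζ|=1} log(1−zζ̄) dσ(ζ)) = (1+λz)^{1−β}. Conversely, for every z ∈ Δ and every λ with |λ| ≤ 1, there exists a probability measure σ on the unit circle with exp((1−β)∫ log(1−zζ̄) dσ(ζ)) = (1+λz)^{1−β}. -/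
/-!
For `‖z‖ < 1` the integrals `∫ log (1 - z ζ̄) dσ` over probability measures `σ` on the circle
fill exactly the set `log '' closedBall 1 ‖z‖`, and `closedBall 1 ‖z‖ = {1 + λ z : ‖λ‖ ≤ 1}`.
Writing `v = a + i b`, this set is the sublevel set `e^a + (1 - ‖z‖²) e^(-a) - 2 cos b ≤ 0` of a
convex function on the strip `|b| ≤ π / 2`, so it is convex and contains every such integral.
Conversely, every point of a bounded convex neighbourhood of `0` lies on a segment between points
of its frontier (rescale along rays with the gauge), and here the frontier is `log` of the circle
`‖u - 1‖ = ‖z‖`, i.e. the range of the kernel `ζ ↦ log (1 - z ζ̄)`; a finite combination of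
Dirac masses then realises the point.
-/

open Complex MeasureTheory Metric
open scoped Real ComplexConjugate

section Gauge

variable {E : Type*} [AddCommGroup E] [Module ℝ E] [TopologicalSpace E] [T1Space E]
  [IsTopologicalAddGroup E] [ContinuousSMul ℝ E] {s : Set E}

theorem gauge_inv_smul_mem_frontier (hc : Convex ℝ s) (hs₀ : s ∈ nhds 0)
    (hb : Bornology.IsVonNBounded ℝ s) {x : E} (hx : x ≠ 0) :
    (gauge s x)⁻¹ • x ∈ frontier s := by
  have hg : 0 < gauge s x := (gauge_pos (absorbent_nhds_zero hs₀) hb).2 hx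
  rw [← gauge_eq_one_iff_mem_frontier hc hs₀, gauge_smul_of_nonneg (inv_nonneg.2 hg.le),
    smul_eq_mul, inv_mul_cancel₀ hg.ne']

theorem Convex.subset_convexHull_frontier [Nontrivial E] (hc : Convex ℝ s) (hs₀ : s ∈ nhds 0)
    (hb : Bornology.IsVonNBounded ℝ s) : s ⊆ convexHull ℝ (frontier s) := by
  have hpos {x : E} (hx : x ≠ 0) : 0 < gauge s x := (gauge_pos (absorbent_nhds_zero hs₀) hb).2 hx
  have hzero : (0 : E) ∈ convexHull ℝ (frontier s) := by
    obtain ⟨y, hy⟩ := exists_ne (0 : E)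
    have hy_pos := hpos hy
    have hny_pos := hpos (neg_ne_zero.2 hy)
    set a := gauge s y
    set b := gauge s (-y)
    have hcancel : a / (a + b) * a⁻¹ - b / (a + b) * b⁻¹ = 0 := by field_simp; ring
    refine segment_subset_convexHull (gauge_inv_smul_mem_frontier hc hs₀ hb hy)
      (gauge_inv_smul_mem_frontier hc hs₀ hb (neg_ne_zero.2 hy))
      ⟨a / (a + b), b / (a + b), by positivity, by positivity, by field_simp, ?_⟩
    rw [smul_smul, smul_smul, smul_neg, ← sub_eq_add_neg, ← sub_smul, hcancel, zero_smul]
  intro x hx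
  rcases eq_or_ne x 0 with rfl | hx₀
  · exact hzero
  refine (convex_convexHull ℝ _).segment_subset hzero
    (subset_convexHull ℝ _ (gauge_inv_smul_mem_frontier hc hs₀ hb hx₀))
    ⟨1 - gauge s x, gauge s x, sub_nonneg.2 (gauge_le_one_of_mem hx), (hpos hx₀).le, by ring, ?_⟩
  rw [smul_zero, zero_add, smul_inv_smul₀ (hpos hx₀).ne']

end Gauge

theorem exists_isProbabilityMeasure_integral_eq_of_mem_convexHull {X E : Type*}
    [MeasurableSpace X] [MeasurableSingletonClass X] [NormedAddCommGroup E] [NormedSpace ℝ E]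
    [CompleteSpace E] (φ : X → E) {x : E} (hx : x ∈ convexHull ℝ (Set.range φ)) :
    ∃ σ : Measure X, IsProbabilityMeasure σ ∧ ∫ ξ, φ ξ ∂σ = x := by
  obtain ⟨ι, _, w, y, hw₀, hw₁, hy, rfl⟩ := mem_convexHull_iff_exists_fintype.1 hx
  choose ξ hξ using hy
  refine ⟨Measure.sum fun i ↦ ENNReal.ofReal (w i) • Measure.dirac (ξ i), ⟨?_⟩, ?_⟩
  · simp [← ENNReal.ofReal_sum_of_nonneg fun i _ ↦ hw₀ i, hw₁]
  · rw [integral_sum_dirac_eq_tsum (fun _ ↦ ENNReal.ofReal_ne_top) (Summable.of_finite),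
      tsum_fintype]
    simp [hξ, ENNReal.toReal_ofReal (hw₀ _)]

-- For `r < 1` this is `log '' closedBall 1 r`.
def logDisk (r : ℝ) : Set ℂ := {v | |v.im| ≤ π / 2 ∧ ‖Complex.exp v - 1‖ ≤ r}

theorem isClosed_logDisk (r : ℝ) : IsClosed (logDisk r) :=
  (isClosed_le (f := fun v : ℂ ↦ |v.im|) (by fun_prop) continuous_const).inter
    (isClosed_le (f := fun v : ℂ ↦ ‖Complex.exp v - 1‖) (by fun_prop) continuous_const)

theorem norm_exp_sub_one_sq (v : ℂ) :
    ‖Complex.exp v - 1‖ ^ 2 = Real.exp v.re ^ 2 - 2 * Real.exp v.re * Real.cos v.im + 1 := by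
  rw [Complex.sq_norm, normSq_apply]
  simp only [sub_re, sub_im, exp_re, exp_im, one_re, one_im]
  linear_combination Real.exp v.re ^ 2 * Real.sin_sq_add_cos_sq v.im

theorem norm_exp_sub_one_le_iff {r : ℝ} (hr : 0 ≤ r) (v : ℂ) :
    ‖Complex.exp v - 1‖ ≤ r ↔
      Real.exp v.re + (1 - r ^ 2) * Real.exp (-v.re) - 2 * Real.cos v.im ≤ 0 := by
  have hE := Real.exp_pos v.re
  have key : Real.exp v.re + (1 - r ^ 2) * Real.exp (-v.re) - 2 * Real.cos v.im =
      (Real.exp v.re ^ 2 - 2 * Real.exp v.re * Real.cos v.im + 1 - r ^ 2) / Real.exp v.re := by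
    rw [Real.exp_neg]
    field_simp
    ring
  rw [← sq_le_sq₀ (norm_nonneg _) hr, norm_exp_sub_one_sq, key, div_le_iff₀ hE, zero_mul,
    sub_nonpos]

theorem convex_logDisk {r : ℝ} (hr₀ : 0 ≤ r) (hr₁ : r ≤ 1) : Convex ℝ (logDisk r) := by
  let strip : Set ℂ := im ⁻¹' Set.Icc (-(π / 2)) (π / 2)
  have hstrip : Convex ℝ strip := (convex_Icc _ _).linear_preimage imLm
  have hexp : ConvexOn ℝ strip fun v : ℂ ↦ Real.exp v.re :=
    (convexOn_exp.comp_linearMap reLm).subset (Set.subset_univ _) hstrip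
  have hexp_neg : ConvexOn ℝ strip fun v : ℂ ↦ Real.exp (-v.re) :=
    (convexOn_exp.comp_linearMap (-reLm)).subset (Set.subset_univ _) hstrip
  have hcos : ConvexOn ℝ strip fun v : ℂ ↦ -Real.cos v.im :=
    strictConcaveOn_cos_Icc.concaveOn.neg.comp_linearMap imLm
  have hf := (hexp.add (hexp_neg.smul (c := 1 - r ^ 2) (by nlinarith))).add
    (hcos.smul (c := (2 : ℝ)) zero_le_two)
  convert hf.convex_le 0 using 1
  ext v
  simp only [logDisk, Set.mem_ofPred_eq, strip, Set.mem_preimage, Set.mem_Icc, abs_le,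
    norm_exp_sub_one_le_iff hr₀, Pi.add_apply, smul_eq_mul, mul_neg, ← sub_eq_add_neg]

theorem log_exp_of_mem_logDisk {r : ℝ} {v : ℂ} (hv : v ∈ logDisk r) : log (Complex.exp v) = v :=
  log_exp (by linarith [(abs_le.1 hv.1).1, Real.pi_pos])
    (by linarith [(abs_le.1 hv.1).2, Real.pi_pos])

theorem log_mem_logDisk {r : ℝ} (hr : r < 1) {u : ℂ} (hu : ‖u - 1‖ ≤ r) : log u ∈ logDisk r := by
  have hre : 0 < u.re := by
    have := neg_le_of_abs_le ((abs_re_le_norm (u - 1)).trans hu)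
    rw [sub_re, one_re] at this
    linarith
  refine ⟨?_, ?_⟩
  · rw [log_im]
    exact abs_arg_le_pi_div_two_iff.2 hre.le
  · rwa [exp_log (slitPlane_ne_zero (Or.inl hre))]

theorem isCompact_logDisk {r : ℝ} (hr : r < 1) : IsCompact (logDisk r) := by
  have hball : closedBall (1 : ℂ) r ⊆ slitPlane :=
    (closedBall_subset_ball hr).trans ball_one_subset_slitPlane
  refine ((isCompact_closedBall 1 r).image_of_continuousOn
    (continuousOn_id.clog hball)).of_isClosed_subset (isClosed_logDisk r) fun v hv ↦ ?_
  exact ⟨Complex.exp v, mem_closedBall_iff_norm.2 hv.2, log_exp_of_mem_logDisk hv⟩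

theorem mem_log_image_sphere_of_mem_logDisk {r : ℝ} {v : ℂ} (hv : v ∈ logDisk r)
    (hvr : ‖Complex.exp v - 1‖ = r) : v ∈ log '' sphere 1 r :=
  ⟨Complex.exp v, mem_sphere_iff_norm.2 hvr, log_exp_of_mem_logDisk hv⟩

theorem setOf_subset_interior_logDisk (r : ℝ) :
    {v : ℂ | |v.im| < π / 2 ∧ ‖Complex.exp v - 1‖ < r} ⊆ interior (logDisk r) :=
  interior_maximal (fun _ hv ↦ ⟨hv.1.le, hv.2.le⟩)
    ((isOpen_lt (f := fun v : ℂ ↦ |v.im|) (by fun_prop) continuous_const).inter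
      (isOpen_lt (f := fun v : ℂ ↦ ‖Complex.exp v - 1‖) (by fun_prop) continuous_const))

theorem logDisk_mem_nhds_zero {r : ℝ} (hr : 0 < r) : logDisk r ∈ nhds 0 :=
  mem_interior_iff_mem_nhds.1 <| setOf_subset_interior_logDisk r <| by simp [Real.pi_pos, hr]

theorem frontier_logDisk_subset {r : ℝ} (hr : r < 1) :
    frontier (logDisk r) ⊆ log '' sphere 1 r := by
  intro v hv
  have hvS : v ∈ logDisk r := (isClosed_logDisk r).frontier_subset hv
  refine mem_log_image_sphere_of_mem_logDisk hvS (hvS.2.antisymm (not_lt.1 fun hlt ↦ ?_))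
  have him : |v.im| = π / 2 :=
    hvS.1.antisymm (not_lt.1 fun h ↦ hv.2 (setOf_subset_interior_logDisk r ⟨h, hlt⟩))
  have hcos : Real.cos v.im = 0 := by rw [← Real.cos_abs, him, Real.cos_pi_div_two]
  have : (1 : ℝ) ≤ ‖Complex.exp v - 1‖ ^ 2 := by
    rw [norm_exp_sub_one_sq, hcos]
    nlinarith [Real.exp_pos v.re]
  nlinarith [norm_nonneg (Complex.exp v - 1)]

theorem norm_one_sub_mul_conj_sub_one (z : ℂ) (ζ : sphere (0 : ℂ) 1) :
    ‖1 - z * conj (ζ : ℂ) - 1‖ = ‖z‖ := by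
  simp

theorem exists_one_sub_mul_conj_eq {z u : ℂ} (hu : ‖u - 1‖ = ‖z‖) :
    ∃ ζ : sphere (0 : ℂ) 1, 1 - z * conj (ζ : ℂ) = u := by
  rcases eq_or_ne z 0 with rfl | hz
  · rw [norm_zero, norm_eq_zero, sub_eq_zero] at hu
    exact ⟨⟨1, by simp⟩, by simp [hu]⟩
  refine ⟨⟨-conj ((u - 1) / z), ?_⟩, ?_⟩
  · rw [mem_sphere_zero_iff_norm, norm_neg, Complex.norm_conj, norm_div, hu,
      div_self (norm_ne_zero_iff.2 hz)]
  simp only [map_neg, conj_conj]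
  field_simp
  ring

theorem log_one_sub_mul_conj_mem_logDisk {z : ℂ} (hz : ‖z‖ < 1) (ζ : sphere (0 : ℂ) 1) :
    log (1 - z * conj (ζ : ℂ)) ∈ logDisk ‖z‖ :=
  log_mem_logDisk hz (norm_one_sub_mul_conj_sub_one z ζ).le

theorem integral_log_one_sub_mul_conj_mem_logDisk {z : ℂ} (hz : ‖z‖ < 1)
    (σ : Measure (sphere (0 : ℂ) 1)) [IsProbabilityMeasure σ] :
    ∫ ζ, log (1 - z * conj (ζ : ℂ)) ∂σ ∈ logDisk ‖z‖ := by
  have hcont : Continuous fun ζ : sphere (0 : ℂ) 1 ↦ log (1 - z * conj (ζ : ℂ)) :=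
    (by fun_prop : Continuous fun ζ : sphere (0 : ℂ) 1 ↦ 1 - z * conj (ζ : ℂ)).clog fun ζ ↦
      ball_one_subset_slitPlane (mem_ball_iff_norm.2 (norm_one_sub_mul_conj_sub_one z ζ ▸ hz))
  exact (convex_logDisk (norm_nonneg z) hz.le).integral_mem (isClosed_logDisk _)
    (ae_of_all _ (log_one_sub_mul_conj_mem_logDisk hz))
    (hcont.integrable_of_hasCompactSupport (.of_compactSpace _))

theorem log_image_sphere_subset_range (z : ℂ) :
    log '' sphere 1 ‖z‖ ⊆ Set.range fun ζ : sphere (0 : ℂ) 1 ↦ log (1 - z * conj (ζ : ℂ)) := by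
  rintro _ ⟨u, hu, rfl⟩
  obtain ⟨ζ, rfl⟩ := exists_one_sub_mul_conj_eq (mem_sphere_iff_norm.1 hu)
  exact ⟨ζ, rfl⟩

theorem exists_isProbabilityMeasure_integral_eq_of_mem_logDisk {z v : ℂ} (hz : ‖z‖ < 1)
    (hv : v ∈ logDisk ‖z‖) :
    ∃ σ : Measure (sphere (0 : ℂ) 1), IsProbabilityMeasure σ ∧
      ∫ ζ, log (1 - z * conj (ζ : ℂ)) ∂σ = v := by
  refine exists_isProbabilityMeasure_integral_eq_of_mem_convexHull _ ?_
  rcases (norm_nonneg z).eq_or_lt with hz₀ | hz₀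
  · refine subset_convexHull ℝ _ (log_image_sphere_subset_range z ?_)
    exact mem_log_image_sphere_of_mem_logDisk hv (hv.2.antisymm (hz₀ ▸ norm_nonneg _))
  · have hb : Bornology.IsVonNBounded ℝ (logDisk ‖z‖) :=
      (NormedSpace.isVonNBounded_iff ℝ).2 (isCompact_logDisk hz).isBounded
    refine convexHull_mono ((frontier_logDisk_subset hz).trans (log_image_sphere_subset_range z))
      ((convex_logDisk hz₀.le hz.le).subset_convexHull_frontier (logDisk_mem_nhds_zero hz₀) hb hv)

theorem mem_logDisk_iff {z v : ℂ} (hz : ‖z‖ < 1) :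
    v ∈ logDisk ‖z‖ ↔ ∃ l : ℂ, ‖l‖ ≤ 1 ∧ log (1 + l * z) = v := by
  refine ⟨fun hv ↦ ⟨(Complex.exp v - 1) / z, ?_, ?_⟩, ?_⟩
  · rw [norm_div]
    exact div_le_one_of_le₀ hv.2 (norm_nonneg z)
  · have hexp : 1 + (Complex.exp v - 1) / z * z = Complex.exp v := by
      rcases eq_or_ne z 0 with rfl | hz₀
      · have : Complex.exp v - 1 = 0 := norm_le_zero_iff.1 (by simpa using hv.2)
        simp [sub_eq_zero.1 this]
      · rw [div_mul_cancel₀ _ hz₀, add_sub_cancel]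
    rw [hexp, log_exp_of_mem_logDisk hv]
  · rintro ⟨l, hl, rfl⟩
    refine log_mem_logDisk hz ?_
    rw [add_sub_cancel_left, norm_mul]
    exact mul_le_of_le_one_left (norm_nonneg z) hl

theorem exp_mul_log_one_add_mul {l z : ℂ} (hl : ‖l‖ ≤ 1) (hz : ‖z‖ < 1) (c : ℂ) :
    Complex.exp (c * log (1 + l * z)) = (1 + l * z) ^ c := by
  have hlz : ‖l * z‖ < 1 := by
    rw [norm_mul]
    exact (mul_le_of_le_one_left (norm_nonneg z) hl).trans_lt hz
  rw [cpow_def_of_ne_zero (slitPlane_ne_zero (mem_slitPlane_of_norm_lt_one hlz)), mul_comm]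

theorem stmt6_general (β : ℝ) :
    (∀ (σ : Measure (sphere (0:ℂ) 1)), IsProbabilityMeasure σ →
      ∀ z ∈ ball (0 : ℂ) 1, ∃ l : ℂ, ‖l‖ ≤ 1 ∧
        Complex.exp ((1 - (β : ℂ)) *
            ∫ ζ : sphere (0:ℂ) 1, Complex.log (1 - z * (starRingEnd ℂ) (ζ : ℂ)) ∂σ)
          = (1 + l * z) ^ (1 - (β : ℂ))) ∧
    (∀ z ∈ ball (0 : ℂ) 1, ∀ l : ℂ, ‖l‖ ≤ 1 →
      ∃ σ : Measure (sphere (0:ℂ) 1), IsProbabilityMeasure σ ∧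
        Complex.exp ((1 - (β : ℂ)) *
            ∫ ζ : sphere (0:ℂ) 1, Complex.log (1 - z * (starRingEnd ℂ) (ζ : ℂ)) ∂σ)
          = (1 + l * z) ^ (1 - (β : ℂ))) := by
  refine ⟨fun σ _ z hz ↦ ?_, fun z hz l hl ↦ ?_⟩
  · rw [mem_ball_zero_iff] at hz
    obtain ⟨l, hl, hlog⟩ :=
      (mem_logDisk_iff hz).1 (integral_log_one_sub_mul_conj_mem_logDisk hz σ)
    exact ⟨l, hl, by rw [← hlog, exp_mul_log_one_add_mul hl hz]⟩
  · rw [mem_ball_zero_iff] at hz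
    obtain ⟨σ, hσ, hint⟩ := exists_isProbabilityMeasure_integral_eq_of_mem_logDisk hz
      ((mem_logDisk_iff hz).2 ⟨l, hl, rfl⟩)
    exact ⟨σ, hσ, by rw [hint, exp_mul_log_one_add_mul hl hz]⟩

theorem stmt6 (β : ℝ) (hβ : 0 ≤ β) (hβ1 : β < 1) :
    (∀ (σ : Measure (sphere (0:ℂ) 1)), IsProbabilityMeasure σ →
      ∀ z ∈ ball (0 : ℂ) 1, ∃ l : ℂ, ‖l‖ ≤ 1 ∧
        Complex.exp ((1 - (β : ℂ)) *
            ∫ ζ : sphere (0:ℂ) 1, Complex.log (1 - z * (starRingEnd ℂ) (ζ : ℂ)) ∂σ)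
          = (1 + l * z) ^ (1 - (β : ℂ))) ∧
    (∀ z ∈ ball (0 : ℂ) 1, ∀ l : ℂ, ‖l‖ ≤ 1 →
      ∃ σ : Measure (sphere (0:ℂ) 1), IsProbabilityMeasure σ ∧
        Complex.exp ((1 - (β : ℂ)) *
            ∫ ζ : sphere (0:ℂ) 1, Complex.log (1 - z * (starRingEnd ℂ) (ζ : ℂ)) ∂σ)
          = (1 + l * z) ^ (1 - (β : ℂ))) :=
  stmt6_general β
end

section
/- Let μ = r·e^{iφ} be a nonzero complex number with |μ−1| ≤ 1 (r > 0, φ ∈ (−π/2, π/2)), β ∈ [0,1), and let f be holomorphic and nonvanishing on Δ with f(0)=1. Define s(z) = z f(z)/(1−z)^μ. Then f satisfies Re((2/μ)·(zf'(z)/f(z)) + (1+z)/(1−z)) > β on Δ if and only if s satisfies Re(e^{−iφ}·z s'(z)/s(z)) > cos φ − r(1−β)/2 for all z ∈ Δ \ {0}. -/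
open Complex MeasureTheory Metric

/-!
Logarithmic differentiation of `s = z f / (1 - z)^μ` gives
`z s'/s = 1 + z f'/f + μ z/(1 - z)`. Since `e^{-iφ} = r/μ`, this becomes
`e^{-iφ} z s'/s = (r/2) ((2/μ) z f'/f + (1 + z)/(1 - z)) + e^{-iφ} - r/2`, so for `z ≠ 0` the
two real-part conditions differ by the positive factor `r/2`; at `z = 0` the first one reads
`β < 1`.
-/

lemma logDeriv_one_sub_cpow_const (μ : ℂ) {z : ℂ} (hz : 1 - z ∈ slitPlane) :
    logDeriv (fun w => (1 - w) ^ μ) z = -μ / (1 - z) := by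
  have hz0 : 1 - z ≠ 0 := slitPlane_ne_zero hz
  have hderiv : HasDerivAt (fun w => (1 - w) ^ μ) (μ * (1 - z) ^ (μ - 1) * -1) z := by
    simpa using ((hasDerivAt_const z (1 : ℂ)).sub (hasDerivAt_id z)).cpow_const (c := μ) hz
  rw [logDeriv_apply, hderiv.deriv, cpow_sub _ _ hz0, cpow_one]
  have : (1 - z) ^ μ ≠ 0 := by simp [cpow_eq_zero_iff, hz0]
  field_simp

lemma mul_deriv_div_eq_of_eventuallyEq_mul_div_one_sub_cpow {f s : ℂ → ℂ} {μ z : ℂ}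
    (hs : s =ᶠ[nhds z] fun w => w * f w / (1 - w) ^ μ) (hf : DifferentiableAt ℂ f z)
    (hfz : f z ≠ 0) (hz : z ≠ 0) (hz1 : 1 - z ∈ slitPlane) :
    z * deriv s z / s z = 1 + z * deriv f z / f z + μ * z / (1 - z) := by
  have hpow : (1 - z) ^ μ ≠ 0 := by simp [cpow_eq_zero_iff, slitPlane_ne_zero hz1]
  have hcpow : DifferentiableAt ℂ (fun w => (1 - w) ^ μ) z := by fun_prop (disch := exact hz1)
  rw [mul_div_assoc, ← logDeriv_apply, (logDeriv_congr_nhds hs).eq_of_nhds,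
    logDeriv_div (f := fun w => w * f w) z (mul_ne_zero hz hfz) hpow
      (differentiableAt_fun_id.mul hf) hcpow,
    logDeriv_mul (f := fun w => w) z hz hfz differentiableAt_fun_id hf,
    logDeriv_one_sub_cpow_const μ hz1, logDeriv_id', logDeriv_apply]
  field_simp [slitPlane_ne_zero hz1]
  ring

lemma exp_neg_mul_I_eq_div {r φ : ℝ} {μ : ℂ} (hr : r ≠ 0) (hμ : μ = r * exp (φ * I)) :
    exp (-φ * I) = r / μ := by
  rw [hμ, neg_mul, exp_neg]
  field_simp [hr]

lemma div_mul_one_add_add_div (r μ z a : ℂ) (hμ : μ ≠ 0) (hz : 1 - z ≠ 0) :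
    r / μ * (1 + a + μ * z / (1 - z)) =
      r / 2 * (2 / μ * a + (1 + z) / (1 - z)) + r / μ - r / 2 := by
  field_simp
  ring

theorem stmt12_general (r φ : ℝ) (hr : 0 < r)
    (μ : ℂ) (hμdef : μ = (r : ℂ) * Complex.exp ((φ : ℂ) * Complex.I))
    (hμ0 : μ ≠ 0)
    (β : ℝ) (hβ1 : β < 1)
    (f : ℂ → ℂ) (hfd : DifferentiableOn ℂ f (ball (0 : ℂ) 1))
    (hfne : ∀ z ∈ ball (0 : ℂ) 1, f z ≠ 0)
    (s : ℂ → ℂ)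
    (hs : ∀ z ∈ ball (0 : ℂ) 1, s z = z * f z / (1 - z) ^ μ) :
    (∀ z ∈ ball (0 : ℂ) 1,
        (β : ℝ) < ((2 / μ) * (z * deriv f z / f z) + (1 + z) / (1 - z)).re) ↔
    (∀ z ∈ ball (0 : ℂ) 1, z ≠ 0 →
        Real.cos φ - r * (1 - β) / 2 <
          (Complex.exp (-(φ : ℂ) * Complex.I) * (z * deriv s z / s z)).re) := by
  have key : ∀ z ∈ ball (0 : ℂ) 1, z ≠ 0 →
      (Real.cos φ - r * (1 - β) / 2 < (exp (-φ * I) * (z * deriv s z / s z)).re ↔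
        β < ((2 / μ) * (z * deriv f z / f z) + (1 + z) / (1 - z)).re) := by
    intro z hz hz0
    have hz1 : 1 - z ∈ slitPlane := by
      simpa [sub_eq_add_neg] using mem_slitPlane_of_norm_lt_one (z := -z) (by simpa using hz)
    have hnhds := isOpen_ball.mem_nhds hz
    rw [mul_deriv_div_eq_of_eventuallyEq_mul_div_one_sub_cpow (Filter.eventually_of_mem hnhds hs)
        (hfd.differentiableAt hnhds) (hfne z hz) hz0 hz1,
      exp_neg_mul_I_eq_div hr.ne' hμdef,
      div_mul_one_add_add_div _ _ _ _ hμ0 (slitPlane_ne_zero hz1),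
      ← exp_neg_mul_I_eq_div hr.ne' hμdef]
    generalize 2 / μ * (z * deriv f z / f z) + (1 + z) / (1 - z) = p
    have hre : (r / 2 * p + exp (-φ * I) - r / 2).re = r / 2 * p.re + Real.cos φ - r / 2 := by
      simp [exp_re]
    rw [hre]
    constructor <;> intro h <;> nlinarith
  refine ⟨fun h z hz hz0 => (key z hz hz0).2 (h z hz), fun h z hz => ?_⟩
  rcases eq_or_ne z 0 with rfl | hz0
  · simpa using hβ1
  · exact (key z hz hz0).1 (h z hz hz0)

theorem stmt12 (r φ : ℝ) (hr : 0 < r) (hφ : -(Real.pi / 2) < φ) (hφ' : φ < Real.pi / 2)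
    (μ : ℂ) (hμdef : μ = (r : ℂ) * Complex.exp ((φ : ℂ) * Complex.I))
    (hμ0 : μ ≠ 0) (hμ : ‖μ - 1‖ ≤ 1)
    (β : ℝ) (hβ : 0 ≤ β) (hβ1 : β < 1)
    (f : ℂ → ℂ) (hfd : DifferentiableOn ℂ f (ball (0 : ℂ) 1))
    (hf0 : f 0 = 1) (hfne : ∀ z ∈ ball (0 : ℂ) 1, f z ≠ 0)
    (s : ℂ → ℂ)
    (hs : ∀ z ∈ ball (0 : ℂ) 1, s z = z * f z / (1 - z) ^ μ) :
    (∀ z ∈ ball (0 : ℂ) 1,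
        (β : ℝ) < ((2 / μ) * (z * deriv f z / f z) + (1 + z) / (1 - z)).re) ↔
    (∀ z ∈ ball (0 : ℂ) 1, z ≠ 0 →
        Real.cos φ - r * (1 - β) / 2 <
          (Complex.exp (-(φ : ℂ) * Complex.I) * (z * deriv s z / s z)).re) :=
  stmt12_general r φ hr μ hμdef hμ0 β hβ1 f hfd hfne s hs
end

section
/- For s ∈ (0,1], the function a_s(t) = (2cos(t/2))^{2s} + 1 − 2(2cos(t/2))^s cos(st/2) is monotonically increasing on [0, π), and for s ∈ (1,2] it is monotonically decreasing on [0, π). Moreover a_s(t) = |(1+e^{it})^s − 1|² for t ∈ (−π, π), where (1+e^{it})^s uses the principal branch. -/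
/-!
With `r = 2 cos (t/2)` and `u = t/2` one computes
`a_s'(t) = 2 s r^(s-1) (sin ((1+s) u) - r^s sin u)`, so monotonicity comes down to comparing
`r^s sin u` with `sin ((1+s) u)` for `u ∈ (0, π/2)`. Since `r sin u = sin 2u` and `sin` is
log-concave on `[0, π]` (weighted AM-GM followed by concavity), writing `(1+s) u` as the convex
combination `(1-s) u + s (2u)` gives `r^s sin u = sin^(1-s) u sin^s 2u ≤ sin ((1+s) u)` for
`s ≤ 1`; for `1 ≤ s ≤ 2`, writing `2u` as a convex combination of `u` and `(1+s) u` gives the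
reverse inequality. The identity with `|(1 + e^{it})^s - 1|²` follows from
`1 + e^{it} = 2 cos (t/2) e^{it/2}`.
-/

open Complex Real

lemma ConcaveOn.rpow_mul_rpow_le {E : Type*} [AddCommGroup E] [Module ℝ E] {S : Set E}
    {f : E → ℝ} (hf : ConcaveOn ℝ S f) (hf₀ : ∀ x ∈ S, 0 ≤ f x) {x y : E} (hx : x ∈ S)
    (hy : y ∈ S) {a b : ℝ} (ha : 0 ≤ a) (hb : 0 ≤ b) (hab : a + b = 1) :
    f x ^ a * f y ^ b ≤ f (a • x + b • y) :=
  (geom_mean_le_arith_mean2_weighted ha hb (hf₀ x hx) (hf₀ y hy) hab).trans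
    (hf.2 hx hy ha hb hab)

lemma Real.sin_two_mul_rpow {u : ℝ} (hsin : 0 ≤ sin u) (hcos : 0 ≤ cos u) (s : ℝ) :
    sin (2 * u) ^ s = (2 * cos u) ^ s * sin u ^ s := by
  rw [sin_two_mul, mul_right_comm, Real.mul_rpow (by positivity) hsin]

lemma Real.sin_rpow_mul_sin_rpow_le_sin {x y a b : ℝ} (hx₀ : 0 ≤ x) (hx : x ≤ π) (hy₀ : 0 ≤ y)
    (hy : y ≤ π) (ha : 0 ≤ a) (hb : 0 ≤ b) (hab : a + b = 1) :
    sin x ^ a * sin y ^ b ≤ sin (a * x + b * y) :=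
  strictConcaveOn_sin_Icc.concaveOn.rpow_mul_rpow_le
    (fun _ hz => sin_nonneg_of_nonneg_of_le_pi hz.1 hz.2) ⟨hx₀, hx⟩ ⟨hy₀, hy⟩ ha hb hab

lemma Real.two_cos_rpow_mul_sin_le_sin_one_add_mul {s u : ℝ} (hs₀ : 0 ≤ s) (hs₁ : s ≤ 1)
    (hu₀ : 0 ≤ u) (hu : u ≤ π / 2) :
    (2 * cos u) ^ s * sin u ≤ sin ((1 + s) * u) := by
  have hsin : 0 ≤ sin u := sin_nonneg_of_nonneg_of_le_pi hu₀ (by linarith [pi_pos])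
  have hcos : 0 ≤ cos u := cos_nonneg_of_mem_Icc ⟨by linarith [pi_pos], hu⟩
  calc (2 * cos u) ^ s * sin u = sin u ^ (1 - s) * sin (2 * u) ^ s := by
        rw [sin_two_mul_rpow hsin hcos, mul_left_comm, ← rpow_add' hsin (by norm_num),
          sub_add_cancel, rpow_one]
    _ ≤ sin ((1 - s) * u + s * (2 * u)) :=
        sin_rpow_mul_sin_rpow_le_sin hu₀ (by linarith) (by linarith) (by linarith)
          (by linarith) hs₀ (by ring)
    _ = sin ((1 + s) * u) := by ring_nf

lemma Real.sin_one_add_mul_le_two_cos_rpow_mul_sin {s u : ℝ} (hs₁ : 1 ≤ s) (hs₂ : s ≤ 2)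
    (hu₀ : 0 < u) (hu : u ≤ π / 2) :
    sin ((1 + s) * u) ≤ (2 * cos u) ^ s * sin u := by
  have hs₀ : 0 < s := by linarith
  have hsin : 0 < sin u := sin_pos_of_pos_of_lt_pi hu₀ (by linarith [pi_pos])
  have hcos : 0 ≤ cos u := cos_nonneg_of_mem_Icc ⟨by linarith [pi_pos], hu⟩
  rcases le_or_gt ((1 + s) * u) π with hπ | hπ
  · have hsin' : 0 ≤ sin ((1 + s) * u) := sin_nonneg_of_nonneg_of_le_pi (by positivity) hπ
    have hlog : sin u ^ ((s - 1) / s) * sin ((1 + s) * u) ^ (1 / s) ≤ sin (2 * u) := by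
      convert sin_rpow_mul_sin_rpow_le_sin (a := (s - 1) / s) (b := 1 / s) hu₀.le (by linarith)
        (by positivity) hπ (div_nonneg (by linarith) hs₀.le) (by positivity) (by field_simp; ring)
        using 2
      field_simp; ring
    have hpow := rpow_le_rpow (by positivity) hlog hs₀.le
    rw [mul_rpow (by positivity) (by positivity), ← rpow_mul hsin.le, ← rpow_mul hsin',
      div_mul_cancel₀ _ hs₀.ne', one_div_mul_cancel hs₀.ne', rpow_one,
      sin_two_mul_rpow hsin.le hcos, ← sub_add_cancel s 1, rpow_add_one hsin.ne', sub_add_cancel,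
      mul_left_comm] at hpow
    exact le_of_mul_le_mul_left hpow (rpow_pos_of_pos hsin _)
  · have : sin ((1 + s) * u) ≤ 0 := by
      rw [← neg_neg (sin _), ← sin_sub_pi, neg_nonpos]
      exact sin_nonneg_of_nonneg_of_le_pi (by linarith) (by nlinarith)
    exact this.trans (by positivity)

noncomputable def normSqPowSubOne (s t : ℝ) : ℝ :=
  (2 * Real.cos (t / 2)) ^ (2 * s) + 1 - 2 * (2 * Real.cos (t / 2)) ^ s * Real.cos (s * t / 2)

lemma hasDerivAt_normSqPowSubOne (s : ℝ) {t : ℝ} (ht : 0 < Real.cos (t / 2)) :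
    HasDerivAt (normSqPowSubOne s)
      (2 * s * (2 * Real.cos (t / 2)) ^ (s - 1) *
        (Real.sin ((1 + s) * (t / 2)) - (2 * Real.cos (t / 2)) ^ s * Real.sin (t / 2))) t := by
  have hr : 0 < 2 * Real.cos (t / 2) := by positivity
  have hdr : HasDerivAt (fun t => 2 * Real.cos (t / 2)) (-Real.sin (t / 2)) t :=
    (((hasDerivAt_id' t).div_const 2).cos.const_mul 2).congr_deriv (by ring)
  have hdc : HasDerivAt (fun t => Real.cos (s * t / 2)) (-Real.sin (s * t / 2) * (s / 2)) t :=
    (((hasDerivAt_id' t).const_mul s).div_const 2).cos.congr_deriv (by ring)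
  refine (((hdr.rpow_const (p := 2 * s) (.inl hr.ne')).add_const 1).sub
    (((hdr.rpow_const (p := s) (.inl hr.ne')).const_mul 2).mul hdc)).congr_deriv ?_
  rw [show (1 + s) * (t / 2) = t / 2 + s * t / 2 by ring, Real.sin_add,
    show 2 * s - 1 = (s - 1) + s by ring, rpow_add hr, rpow_sub_one hr.ne']
  field_simp
  ring

lemma Real.cos_half_pos_of_mem_Ioo {t : ℝ} (ht : t ∈ Set.Ioo (-π) π) : 0 < Real.cos (t / 2) :=
  cos_pos_of_mem_Ioo ⟨by linarith [ht.1], by linarith [ht.2]⟩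

lemma Complex.norm_cpow_ofReal_sub_one_sq (z : ℂ) (s : ℝ) :
    ‖z ^ (s : ℂ) - 1‖ ^ 2 = ‖z‖ ^ (2 * s) + 1 - 2 * ‖z‖ ^ s * Real.cos (arg z * s) := by
  rw [Complex.sq_norm, normSq_apply, sub_re, sub_im, cpow_ofReal_re, cpow_ofReal_im, one_re,
    one_im, mul_comm 2 s, rpow_mul (norm_nonneg z), rpow_two]
  linear_combination (‖z‖ ^ s) ^ 2 * Real.sin_sq_add_cos_sq (arg z * s)

lemma Complex.one_add_exp_mul_I (t : ℝ) :
    1 + exp (t * I) = (2 * Real.cos (t / 2) : ℝ) * exp ((t / 2 : ℝ) * I) := by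
  push_cast
  rw [two_cos, add_mul, ← exp_add, ← exp_add]
  ring_nf
  rw [exp_zero, add_comm]

lemma Complex.norm_one_add_exp_mul_I {t : ℝ} (ht : 0 ≤ Real.cos (t / 2)) :
    ‖1 + exp (t * I)‖ = 2 * Real.cos (t / 2) := by
  rw [one_add_exp_mul_I, norm_mul, norm_exp_ofReal_mul_I, mul_one, norm_real,
    Real.norm_of_nonneg (by positivity)]

lemma Complex.arg_one_add_exp_mul_I {t : ℝ} (ht : t ∈ Set.Ioo (-π) π) :
    arg (1 + exp (t * I)) = t / 2 := by
  rw [one_add_exp_mul_I, arg_real_mul _ (by linarith [cos_half_pos_of_mem_Ioo ht]), arg_exp_mul_I,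
    toIocMod_eq_self]
  constructor <;> linarith [ht.1, ht.2, pi_pos]

lemma differentiableOn_normSqPowSubOne (s : ℝ) :
    DifferentiableOn ℝ (normSqPowSubOne s) (Set.Ioo (-π) π) := fun _ ht =>
  (hasDerivAt_normSqPowSubOne s (cos_half_pos_of_mem_Ioo ht)).differentiableAt
    |>.differentiableWithinAt

lemma Real.Ico_zero_pi_subset_Ioo : Set.Ico 0 π ⊆ Set.Ioo (-π) π :=
  Set.Ico_subset_Ioo_left (neg_lt_zero.2 pi_pos)

lemma monotoneOn_normSqPowSubOne {s : ℝ} (hs₀ : 0 ≤ s) (hs₁ : s ≤ 1) :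
    MonotoneOn (normSqPowSubOne s) (Set.Ico 0 π) := by
  have hdiff := (differentiableOn_normSqPowSubOne s).mono Ico_zero_pi_subset_Ioo
  refine monotoneOn_of_deriv_nonneg (convex_Ico 0 π) hdiff.continuousOn
    (hdiff.mono interior_subset) fun t ht => ?_
  rw [interior_Ico] at ht
  have hcos := cos_half_pos_of_mem_Ioo (Ico_zero_pi_subset_Ioo (Set.Ioo_subset_Ico_self ht))
  rw [(hasDerivAt_normSqPowSubOne s hcos).deriv]
  exact mul_nonneg (by positivity) (sub_nonneg.2 (two_cos_rpow_mul_sin_le_sin_one_add_mul hs₀ hs₁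
    (by linarith [ht.1]) (by linarith [ht.2])))

lemma antitoneOn_normSqPowSubOne {s : ℝ} (hs₁ : 1 ≤ s) (hs₂ : s ≤ 2) :
    AntitoneOn (normSqPowSubOne s) (Set.Ico 0 π) := by
  have hdiff := (differentiableOn_normSqPowSubOne s).mono Ico_zero_pi_subset_Ioo
  refine antitoneOn_of_deriv_nonpos (convex_Ico 0 π) hdiff.continuousOn
    (hdiff.mono interior_subset) fun t ht => ?_
  rw [interior_Ico] at ht
  have hcos := cos_half_pos_of_mem_Ioo (Ico_zero_pi_subset_Ioo (Set.Ioo_subset_Ico_self ht))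
  rw [(hasDerivAt_normSqPowSubOne s hcos).deriv]
  exact mul_nonpos_of_nonneg_of_nonpos (by positivity) (sub_nonpos.2
    (sin_one_add_mul_le_two_cos_rpow_mul_sin hs₁ hs₂ (by linarith [ht.1]) (by linarith [ht.2])))

lemma normSqPowSubOne_eq_norm_sq (s : ℝ) {t : ℝ} (ht : t ∈ Set.Ioo (-π) π) :
    normSqPowSubOne s t = ‖(1 + exp (t * I)) ^ (s : ℂ) - 1‖ ^ 2 := by
  rw [normSqPowSubOne, norm_cpow_ofReal_sub_one_sq,
    norm_one_add_exp_mul_I (cos_half_pos_of_mem_Ioo ht).le, arg_one_add_exp_mul_I ht,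
    div_mul_eq_mul_div, mul_comm t]

theorem stmt14 (s : ℝ) (hs0 : 0 < s) (hs2 : s ≤ 2)
    (a : ℝ → ℝ)
    (ha : ∀ t, a t = (2 * Real.cos (t / 2)) ^ (2 * s) + 1 -
        2 * (2 * Real.cos (t / 2)) ^ s * Real.cos (s * t / 2)) :
    (s ≤ 1 → MonotoneOn a (Set.Ico 0 Real.pi)) ∧
    (1 < s → AntitoneOn a (Set.Ico 0 Real.pi)) ∧
    (∀ t ∈ Set.Ioo (-Real.pi) Real.pi,
      a t = ‖(1 + Complex.exp (t * Complex.I)) ^ (s : ℂ) - 1‖ ^ 2) := by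
  obtain rfl : a = normSqPowSubOne s := funext ha
  exact ⟨monotoneOn_normSqPowSubOne hs0.le, fun hs1 => antitoneOn_normSqPowSubOne hs1.le hs2,
    fun t => normSqPowSubOne_eq_norm_sq s⟩
end

section
/- For s ∈ (0,1], the distance from the point 1 to the curve { (1−z)^s : |z| = 1, z ≠ 1 } equals √(1 + 2^{2s} − 2^{s+1}); for s ∈ (1,2] this distance equals 1. Here (1−z)^s uses the principal branch (defined since Re(1−z) ≥ 0 and 1−z ≠ 0 for z ≠ 1 on the circle). -/
/-!
Write `1 - z = 2 cos φ · e^{iφ}` with `φ = arg (1 - z) ∈ (-π/2, π/2)`, so that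
`‖(1 - z)^s - 1‖² = ρ² - 2ρ cos (sφ) + 1` with `ρ = (2 cos φ)^s`.
For `s ≤ 1` this is increasing in `|φ|`: its derivative has the sign of
`sin ((1 + s)φ) - sin φ (2 cos φ)^s`, which is nonnegative by Bernoulli's inequality and the
concavity of `sin`; so the minimum is attained at `z = -1`.
For `1 ≤ s ≤ 2` it is at least `1`, because `2 cos (sφ) ≤ (2 cos φ)^s` (Bernoulli's inequality
and the concavity of `cos`, applied with the exponent `1/s`), and the value `1` is approached
as `z → 1`.
-/

open Complex Filter Topology
open scoped Real

lemma two_mul_cos_rpow_le_two_mul_cos_mul {σ ψ : ℝ} (hσ0 : 0 ≤ σ) (hσ1 : σ ≤ 1)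
    (hψ : |ψ| ≤ π / 2) : (2 * Real.cos ψ) ^ σ ≤ 2 * Real.cos (σ * ψ) := by
  have hψ' : ψ ∈ Set.Icc (-(π / 2)) (π / 2) := abs_le.mp hψ
  have hcos : 0 ≤ Real.cos ψ := Real.cos_nonneg_of_mem_Icc hψ'
  have bernoulli : Real.cos ψ ^ σ ≤ 1 + σ * (Real.cos ψ - 1) := by
    simpa using rpow_one_add_le_one_add_mul_self (s := Real.cos ψ - 1) (by linarith) hσ0 hσ1
  have concave : σ * Real.cos ψ + (1 - σ) * Real.cos 0 ≤ Real.cos (σ * ψ + (1 - σ) * 0) :=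
    strictConcaveOn_cos_Icc.concaveOn.2 hψ' ⟨by linarith [Real.pi_pos], by linarith [Real.pi_pos]⟩
      hσ0 (by linarith) (by ring)
  have two_rpow : (2 : ℝ) ^ σ ≤ 2 := by
    simpa using Real.rpow_le_rpow_of_exponent_le one_le_two hσ1
  rw [Real.mul_rpow zero_le_two hcos]
  simp only [Real.cos_zero, mul_zero, add_zero, mul_one] at concave
  calc (2 : ℝ) ^ σ * Real.cos ψ ^ σ ≤ 2 * (1 + σ * (Real.cos ψ - 1)) :=
        mul_le_mul two_rpow bernoulli (by positivity) zero_le_two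
    _ ≤ 2 * Real.cos (σ * ψ) := by linarith

lemma two_mul_cos_mul_le_two_mul_cos_rpow {s φ : ℝ} (hs1 : 1 ≤ s) (hs2 : s ≤ 2)
    (hφ : |φ| ≤ π / 2) : 2 * Real.cos (s * φ) ≤ (2 * Real.cos φ) ^ s := by
  have hs0 : 0 < s := by linarith
  have hcos : 0 ≤ 2 * Real.cos φ := by
    have := Real.cos_nonneg_of_mem_Icc (abs_le.mp hφ); linarith
  rcases le_or_gt (Real.cos (s * φ)) 0 with hneg | hpos
  · linarith [Real.rpow_nonneg hcos s]
  have hsφ : |s * φ| ≤ π / 2 := by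
    by_contra! h
    have hle : |s * φ| ≤ π := by
      rw [abs_mul, abs_of_pos hs0]; nlinarith [abs_nonneg φ]
    have := Real.cos_nonpos_of_pi_div_two_le_of_le h.le (by linarith [Real.pi_pos])
    rw [Real.cos_abs] at this
    linarith
  have key := two_mul_cos_rpow_le_two_mul_cos_mul (inv_nonneg.mpr hs0.le)
    (inv_le_one_of_one_le₀ hs1) hsφ
  rw [inv_mul_cancel_left₀ hs0.ne'] at key
  exact (Real.rpow_inv_le_iff_of_pos (by linarith) hcos hs0).mp key

lemma sin_mul_two_mul_cos_rpow_le {s φ : ℝ} (hs0 : 0 ≤ s) (hs1 : s ≤ 1) (hφ0 : 0 ≤ φ)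
    (hφ : φ ≤ π / 2) : Real.sin φ * (2 * Real.cos φ) ^ s ≤ Real.sin ((1 + s) * φ) := by
  have hsin : 0 ≤ Real.sin φ := Real.sin_nonneg_of_nonneg_of_le_pi hφ0 (by linarith [Real.pi_pos])
  have hcos : 0 ≤ Real.cos φ := Real.cos_nonneg_of_mem_Icc ⟨by linarith [Real.pi_pos], hφ⟩
  have bernoulli : (2 * Real.cos φ) ^ s ≤ 1 + s * (2 * Real.cos φ - 1) := by
    simpa using rpow_one_add_le_one_add_mul_self (s := 2 * Real.cos φ - 1) (by linarith) hs0 hs1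
  have concave : (1 - s) * Real.sin φ + s * Real.sin (2 * φ)
      ≤ Real.sin ((1 - s) * φ + s * (2 * φ)) :=
    strictConcaveOn_sin_Icc.concaveOn.2 ⟨hφ0, by linarith [Real.pi_pos]⟩ ⟨by linarith, by linarith⟩
      (by linarith) hs0 (by ring)
  rw [Real.sin_two_mul, show (1 - s) * φ + s * (2 * φ) = (1 + s) * φ by ring] at concave
  calc Real.sin φ * (2 * Real.cos φ) ^ s ≤ Real.sin φ * (1 + s * (2 * Real.cos φ - 1)) :=
        mul_le_mul_of_nonneg_left bernoulli hsin
    _ ≤ Real.sin ((1 + s) * φ) := by linarith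

/-- `‖(1 - z)^s - 1‖²` for `‖z‖ = 1`, in terms of `φ = arg (1 - z)`, using `‖1 - z‖ = 2 cos φ`. -/
noncomputable def curveSqDist (s φ : ℝ) : ℝ :=
  ((2 * Real.cos φ) ^ s) ^ 2 - 2 * (2 * Real.cos φ) ^ s * Real.cos (s * φ) + 1

lemma curveSqDist_neg (s φ : ℝ) : curveSqDist s (-φ) = curveSqDist s φ := by
  simp [curveSqDist]

lemma curveSqDist_zero (s : ℝ) : curveSqDist s 0 = 1 + 2 ^ (2 * s) - 2 ^ (s + 1) := by
  rw [curveSqDist, mul_comm 2 s, Real.rpow_mul zero_le_two, Real.rpow_two,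
    Real.rpow_add_one two_ne_zero]
  simp only [Real.cos_zero, mul_zero, mul_one]
  ring

lemma hasDerivAt_curveSqDist (s : ℝ) {φ : ℝ} (hφ : 0 < Real.cos φ) :
    HasDerivAt (curveSqDist s) (4 * s * (2 * Real.cos φ) ^ (s - 1) *
      (Real.sin ((1 + s) * φ) - Real.sin φ * (2 * Real.cos φ) ^ s)) φ := by
  have hB : 2 * Real.cos φ ≠ 0 := by positivity
  have hρ : HasDerivAt (fun x => (2 * Real.cos x) ^ s)
      (2 * -Real.sin φ * s * (2 * Real.cos φ) ^ (s - 1)) φ :=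
    ((Real.hasDerivAt_cos φ).const_mul 2).rpow_const (Or.inl hB)
  have hc : HasDerivAt (fun x => Real.cos (s * x)) (-Real.sin (s * φ) * s) φ := by
    simpa using ((hasDerivAt_id φ).const_mul s).cos
  refine (((hρ.pow 2).sub ((hρ.const_mul 2).mul hc)).add_const 1).congr_deriv ?_
  have hsplit : (2 * Real.cos φ) ^ s = (2 * Real.cos φ) ^ (s - 1) * (2 * Real.cos φ) := by
    rw [← Real.rpow_add_one hB, sub_add_cancel]
  rw [show (1 + s) * φ = φ + s * φ by ring, Real.sin_add, hsplit]
  push_cast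
  ring

lemma monotoneOn_curveSqDist {s : ℝ} (hs0 : 0 ≤ s) (hs1 : s ≤ 1) :
    MonotoneOn (curveSqDist s) (Set.Ico 0 (π / 2)) := by
  have hcos : ∀ x ∈ Set.Ico 0 (π / 2), 0 < Real.cos x := fun x hx =>
    Real.cos_pos_of_mem_Ioo ⟨by linarith [hx.1, Real.pi_pos], hx.2⟩
  refine monotoneOn_of_hasDerivWithinAt_nonneg (convex_Ico 0 (π / 2))
    (fun x hx => (hasDerivAt_curveSqDist s (hcos x hx)).continuousAt.continuousWithinAt)
    (fun x hx => (hasDerivAt_curveSqDist s (hcos x (interior_subset hx))).hasDerivWithinAt)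
    (fun x hx => ?_)
  have hx := interior_subset hx
  have hB : 0 < 2 * Real.cos x := by linarith [hcos x hx]
  exact mul_nonneg (by positivity) (sub_nonneg.mpr
    (sin_mul_two_mul_cos_rpow_le hs0 hs1 hx.1 hx.2.le))

lemma curveSqDist_zero_le {s φ : ℝ} (hs0 : 0 ≤ s) (hs1 : s ≤ 1) (hφ : |φ| < π / 2) :
    curveSqDist s 0 ≤ curveSqDist s φ := by
  have h := monotoneOn_curveSqDist hs0 hs1 ⟨le_rfl, by positivity⟩ ⟨abs_nonneg φ, hφ⟩
    (abs_nonneg φ)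
  rcases abs_choice φ with h' | h' <;> rw [h'] at h
  · exact h
  · rwa [curveSqDist_neg] at h

lemma one_le_curveSqDist {s φ : ℝ} (hs1 : 1 ≤ s) (hs2 : s ≤ 2) (hφ : |φ| ≤ π / 2) :
    1 ≤ curveSqDist s φ := by
  have hB : 0 ≤ 2 * Real.cos φ := by
    have := Real.cos_nonneg_of_mem_Icc (abs_le.mp hφ); linarith
  have hρ := Real.rpow_nonneg hB s
  have key := two_mul_cos_mul_le_two_mul_cos_rpow hs1 hs2 hφ
  rw [curveSqDist]
  nlinarith

lemma sq_norm_cpow_ofReal_sub_one (u : ℂ) (s : ℝ) :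
    ‖u ^ (s : ℂ) - 1‖ ^ 2 = (‖u‖ ^ s) ^ 2 - 2 * ‖u‖ ^ s * Real.cos (s * arg u) + 1 := by
  rw [Complex.sq_norm, normSq_sub, ← Complex.sq_norm, norm_cpow_real]
  simp only [map_one, mul_one, cpow_ofReal_re, mul_comm (arg u)]
  ring

lemma sq_norm_one_sub_of_norm_eq_one {z : ℂ} (hz : ‖z‖ = 1) : ‖1 - z‖ ^ 2 = 2 * (1 - z).re := by
  rw [Complex.sq_norm, normSq_sub, ← Complex.sq_norm, ← Complex.sq_norm, hz]
  simp only [norm_one, one_pow, one_mul, conj_re, sub_re, one_re]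
  ring

lemma norm_one_sub_eq_two_mul_cos_arg {z : ℂ} (hz : ‖z‖ = 1) (hz1 : z ≠ 1) :
    ‖1 - z‖ = 2 * Real.cos (arg (1 - z)) := by
  have hu : 1 - z ≠ 0 := sub_ne_zero.mpr hz1.symm
  have hpos : 0 < ‖1 - z‖ := norm_pos_iff.mpr hu
  rw [cos_arg hu, ← mul_div_assoc, ← sq_norm_one_sub_of_norm_eq_one hz]
  field_simp

lemma abs_arg_one_sub_lt_pi_div_two {z : ℂ} (hz : ‖z‖ = 1) (hz1 : z ≠ 1) :
    |arg (1 - z)| < π / 2 := by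
  have hpos : 0 < ‖1 - z‖ ^ 2 := by
    have := norm_pos_iff.mpr (sub_ne_zero.mpr hz1.symm); positivity
  rw [sq_norm_one_sub_of_norm_eq_one hz] at hpos
  exact abs_arg_lt_pi_div_two_iff.mpr (Or.inl (by linarith))

lemma sq_norm_one_sub_cpow_sub_one {z : ℂ} (hz : ‖z‖ = 1) (hz1 : z ≠ 1) (s : ℝ) :
    ‖(1 - z) ^ (s : ℂ) - 1‖ ^ 2 = curveSqDist s (arg (1 - z)) := by
  rw [sq_norm_cpow_ofReal_sub_one, norm_one_sub_eq_two_mul_cos_arg hz hz1, curveSqDist]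

def circleCpowDists (s : ℝ) : Set ℝ :=
  {d : ℝ | ∃ z : ℂ, ‖z‖ = 1 ∧ z ≠ 1 ∧ d = ‖(1 - z) ^ (s : ℂ) - 1‖}

lemma isLeast_circleCpowDists {s : ℝ} (hs0 : 0 ≤ s) (hs1 : s ≤ 1) :
    IsLeast (circleCpowDists s) (Real.sqrt (curveSqDist s 0)) := by
  refine ⟨⟨-1, by simp, by norm_num, ?_⟩, ?_⟩
  · rw [← Real.sqrt_sq (norm_nonneg _), sq_norm_one_sub_cpow_sub_one (by simp) (by norm_num)]
    norm_num
  · rintro d ⟨z, hz, hz1, rfl⟩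
    rw [← Real.sqrt_sq (norm_nonneg _), sq_norm_one_sub_cpow_sub_one hz hz1]
    exact Real.sqrt_le_sqrt (curveSqDist_zero_le hs0 hs1 (abs_arg_one_sub_lt_pi_div_two hz hz1))

lemma le_one_of_mem_lowerBounds_circleCpowDists {s b : ℝ} (hs : 0 < s)
    (hb : b ∈ lowerBounds (circleCpowDists s)) : b ≤ 1 := by
  let f : ℝ → ℝ := fun θ => ‖(1 - exp (θ * I)) ^ (s : ℂ) - 1‖
  have hf : ContinuousAt f 0 := by
    have hchord : ContinuousAt (fun θ : ℝ => 1 - exp (θ * I)) 0 := by fun_prop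
    have hpow : ContinuousAt (fun u : ℂ => u ^ (s : ℂ)) 0 :=
      continuousAt_cpow_const_of_re_pos (Or.inl (by simp)) (by simpa using hs)
    exact ((hpow.comp_of_eq hchord (by simp)).sub continuousAt_const).norm
  have hlim : Tendsto f (𝓝[>] 0) (𝓝 1) := by
    simpa [f, zero_cpow (ofReal_ne_zero.mpr hs.ne')] using hf.tendsto.mono_left nhdsWithin_le_nhds
  refine ge_of_tendsto hlim ?_
  filter_upwards [Ioo_mem_nhdsGT Real.pi_pos] with θ hθ
  refine hb ⟨exp (θ * I), norm_exp_ofReal_mul_I θ, fun h => ?_, rfl⟩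
  have him := congrArg Complex.im h
  rw [exp_ofReal_mul_I_im, one_im] at him
  exact (Real.sin_pos_of_pos_of_lt_pi hθ.1 hθ.2).ne' him

lemma isGLB_circleCpowDists {s : ℝ} (hs1 : 1 ≤ s) (hs2 : s ≤ 2) :
    IsGLB (circleCpowDists s) 1 := by
  refine ⟨?_, fun b hb => le_one_of_mem_lowerBounds_circleCpowDists (by linarith) hb⟩
  rintro d ⟨z, hz, hz1, rfl⟩
  rw [← Real.sqrt_sq (norm_nonneg _), sq_norm_one_sub_cpow_sub_one hz hz1, Real.one_le_sqrt]
  exact one_le_curveSqDist hs1 hs2 (abs_arg_one_sub_lt_pi_div_two hz hz1).le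

theorem stmt15 (s : ℝ) (hs0 : 0 < s) (hs2 : s ≤ 2) :
    (s ≤ 1 →
      sInf {d : ℝ | ∃ z : ℂ, ‖z‖ = 1 ∧ z ≠ 1 ∧
          d = ‖(1 - z) ^ (s : ℂ) - 1‖} =
        Real.sqrt (1 + 2 ^ (2 * s) - 2 ^ (s + 1))) ∧
    (1 < s →
      sInf {d : ℝ | ∃ z : ℂ, ‖z‖ = 1 ∧ z ≠ 1 ∧
          d = ‖(1 - z) ^ (s : ℂ) - 1‖} = 1) := by
  refine ⟨fun hs1 => ?_, fun hs1 => ?_⟩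
  · rw [← curveSqDist_zero]
    exact (isLeast_circleCpowDists hs0.le hs1).csInf_eq
  · exact (isGLB_circleCpowDists hs1.le hs2).csInf_eq ⟨_, -1, by simp, by norm_num, rfl⟩
end

section
/- Let β ∈ (0,1), n ∈ ℕ, let ζ₁,…,ζₙ be points on the unit circle, and σ₁,…,σₙ ≥ 0 with Σσⱼ = 1. Define f(z) = (1−z)·∏ⱼ (1−z ζ̄ⱼ)^{−(1−β)σⱼ} on the open unit disk (principal branch powers). Then the image f(Δ) contains the image f₀(Δ) where f₀(z) = (1−z)^β; i.e., f₀ is subordinate to f: there exists a holomorphic ω: Δ → Δ with ω(0)=0 and f₀ = f ∘ ω. -/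
/-!
The function `ω` must solve `1 - ω = (1 - z) ^ β * ∏ j, (1 - ω * conj ζⱼ) ^ ((1 - β) σⱼ)`, i.e.
`ω z` must be a fixed point of `T z w = 1 - exp (β log (1 - z) + (1 - β) ∑ σⱼ log (1 - w conj ζⱼ))`.
Since `log '' ball 1 1 = {x + iy | |y| < π/2, x < log (2 cos y)}` is convex (`log ∘ cos` is
concave), the exponent stays in it and `T z` maps the unit disc into itself; it is not onto, as
`‖1 - T z w‖ ≤ |1 - z| ^ β * 2 ^ (1 - β) < 2`. By the strict Schwarz–Pick lemma and compactness,
the maps `T z`, `|z| ≤ r`, contract the pseudo-hyperbolic distance `‖mobius a b‖` on the disc of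
radius `r` by a common factor `κ < 1`. The Picard iterates `ωₖ₊₁ z = T z (ωₖ z)`, `ω₀ = 0`, are
holomorphic self-maps of the disc fixing `0`, so by Schwarz `|ωₖ z| ≤ |z|`; hence they converge
geometrically, locally uniformly, to a holomorphic fixed point `ω`.
-/

open Complex ComplexConjugate Metric Set Filter Topology
open scoped Real

noncomputable section

local notation "𝔻" => ball (0 : ℂ) 1

namespace Spirallike

def mobius (a z : ℂ) : ℂ := (a - z) / (1 - conj a * z)

lemma one_sub_conj_mul_ne_zero {a z : ℂ} (ha : ‖a‖ < 1) (hz : ‖z‖ ≤ 1) :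
    1 - conj a * z ≠ 0 := by
  have : ‖conj a * z‖ < 1 := by
    rw [norm_mul, norm_conj]
    nlinarith [norm_nonneg a, norm_nonneg z]
  intro h
  rw [← sub_eq_zero.mp h, norm_one] at this
  exact this.false

lemma norm_one_sub_conj_mul_le (a z : ℂ) : ‖1 - conj a * z‖ ≤ 1 + ‖a‖ * ‖z‖ := by
  simpa using norm_sub_le (1 : ℂ) (conj a * z)

lemma one_sub_mul_le_norm_one_sub_conj_mul (a z : ℂ) : 1 - ‖a‖ * ‖z‖ ≤ ‖1 - conj a * z‖ := by
  simpa using norm_sub_norm_le (1 : ℂ) (conj a * z)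

lemma one_sub_norm_mobius_sq {a z : ℂ} (ha : ‖a‖ < 1) (hz : ‖z‖ ≤ 1) :
    1 - ‖mobius a z‖ ^ 2 = (1 - ‖a‖ ^ 2) * (1 - ‖z‖ ^ 2) / ‖1 - conj a * z‖ ^ 2 := by
  have hm : ‖1 - conj a * z‖ ≠ 0 := norm_ne_zero_iff.mpr (one_sub_conj_mul_ne_zero ha hz)
  have key : ‖1 - conj a * z‖ ^ 2 - ‖a - z‖ ^ 2 = (1 - ‖a‖ ^ 2) * (1 - ‖z‖ ^ 2) := by
    simp only [← normSq_eq_norm_sq, normSq_apply, sub_re, sub_im, mul_re, mul_im, one_re, one_im,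
      conj_re, conj_im]
    ring
  rw [mobius, norm_div, div_pow, one_sub_div (pow_ne_zero 2 hm), key]

lemma norm_mobius_lt_one {a z : ℂ} (ha : ‖a‖ < 1) (hz : ‖z‖ < 1) : ‖mobius a z‖ < 1 := by
  have h := one_sub_norm_mobius_sq ha hz.le
  have hpos : 0 < (1 - ‖a‖ ^ 2) * (1 - ‖z‖ ^ 2) / ‖1 - conj a * z‖ ^ 2 := by
    have := norm_pos_iff.mpr (one_sub_conj_mul_ne_zero ha hz.le)
    have : ‖a‖ ^ 2 < 1 := by nlinarith [norm_nonneg a]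
    have : ‖z‖ ^ 2 < 1 := by nlinarith [norm_nonneg z]
    positivity
  nlinarith [norm_nonneg (mobius a z)]

lemma mapsTo_mobius {a : ℂ} (ha : ‖a‖ < 1) : MapsTo (mobius a) 𝔻 𝔻 := fun z hz => by
  simpa using norm_mobius_lt_one ha (by simpa using hz)

@[simp] lemma mobius_self (a : ℂ) : mobius a a = 0 := by simp [mobius]

@[simp] lemma mobius_zero (a : ℂ) : mobius a 0 = a := by simp [mobius]

@[simp] lemma zero_mobius (z : ℂ) : mobius 0 z = -z := by simp [mobius]

lemma mobius_mobius {a z : ℂ} (ha : ‖a‖ < 1) (hz : ‖z‖ < 1) : mobius a (mobius a z) = z := by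
  have hd := one_sub_conj_mul_ne_zero ha hz.le
  have ha' := one_sub_conj_mul_ne_zero ha ha.le
  have num : a - (a - z) / (1 - conj a * z) = z * (1 - conj a * a) / (1 - conj a * z) := by
    rw [eq_div_iff hd, sub_mul, div_mul_cancel₀ _ hd]; ring
  have den : 1 - conj a * ((a - z) / (1 - conj a * z)) = (1 - conj a * a) / (1 - conj a * z) := by
    rw [eq_div_iff hd, sub_mul, mul_assoc, div_mul_cancel₀ _ hd]; ring
  rw [mobius, mobius, num, den, div_div_div_cancel_right₀ hd, mul_div_cancel_right₀ _ ha']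

lemma hasDerivAt_mobius (a : ℂ) {z : ℂ} (hz : 1 - conj a * z ≠ 0) :
    HasDerivAt (mobius a) ((normSq a - 1) / (1 - conj a * z) ^ 2) z := by
  refine (((hasDerivAt_id z).const_sub a).div
    ((hasDerivAt_id z).const_mul (conj a) |>.const_sub 1) hz).congr_deriv ?_
  rw [← mul_conj]
  simp only [id]
  ring

lemma differentiableOn_mobius {a : ℂ} (ha : ‖a‖ < 1) : DifferentiableOn ℂ (mobius a) 𝔻 :=
  fun _ hz => (hasDerivAt_mobius a (one_sub_conj_mul_ne_zero ha
    (mem_ball_zero_iff.mp hz).le)).differentiableAt.differentiableWithinAt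

lemma norm_mobius_le_of_norm_le {a z : ℂ} {r : ℝ} (ha : ‖a‖ ≤ r) (hz : ‖z‖ ≤ r) (hr : r < 1) :
    ‖mobius a z‖ ≤ 2 * r / (1 + r ^ 2) := by
  have ha1 := ha.trans_lt hr
  have hz1 := hz.trans_lt hr
  have h := one_sub_norm_mobius_sq ha1 hz1.le
  have hm := norm_one_sub_conj_mul_le a z
  have hm0 := norm_pos_iff.mpr (one_sub_conj_mul_ne_zero ha1 hz1.le)
  have hs := norm_mobius_lt_one ha1 hz1
  have hp := norm_nonneg a
  have hq := norm_nonneg z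
  rw [eq_div_iff (by positivity)] at h
  have hsq : (‖mobius a z‖ * (1 + ‖a‖ * ‖z‖)) ^ 2 ≤ (‖a‖ + ‖z‖) ^ 2 := by
    have := mul_le_mul_of_nonneg_left (pow_le_pow_left₀ hm0.le hm 2)
      (by nlinarith [norm_nonneg (mobius a z)] : 0 ≤ 1 - ‖mobius a z‖ ^ 2)
    nlinarith
  have hs' := (sq_le_sq₀ (by positivity) (by positivity)).mp hsq
  have hpqr : (‖a‖ + ‖z‖) * (1 + r ^ 2) ≤ 2 * r * (1 + ‖a‖ * ‖z‖) := by
    nlinarith [mul_nonneg (sub_nonneg.mpr ha) (by nlinarith : 0 ≤ 1 - r * ‖z‖),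
      mul_nonneg (sub_nonneg.mpr hz) (by nlinarith : 0 ≤ 1 - r * ‖a‖)]
  rw [le_div_iff₀ (by positivity)]
  nlinarith [norm_nonneg (mobius a z)]

lemma norm_le_of_norm_mobius_le {a z : ℂ} {c t : ℝ} (ha : ‖a‖ < 1) (hz : ‖z‖ < 1)
    (hac : ‖a‖ ≤ c) (ht : ‖mobius a z‖ ≤ t) (ht1 : t < 1) :
    ‖z‖ ≤ (c + t) / (1 + c * t) := by
  have h := one_sub_norm_mobius_sq ha hz.le
  have hm := one_sub_mul_le_norm_one_sub_conj_mul a z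
  have hm0 := norm_pos_iff.mpr (one_sub_conj_mul_ne_zero ha hz.le)
  have hs := norm_mobius_lt_one ha hz
  have hp := norm_nonneg a
  have hq := norm_nonneg z
  have hpq : 0 ≤ 1 - ‖a‖ * ‖z‖ := by nlinarith
  rw [eq_div_iff (by positivity)] at h
  have hsq : (‖z‖ - ‖a‖) ^ 2 ≤ (‖mobius a z‖ * (1 - ‖a‖ * ‖z‖)) ^ 2 := by
    have := mul_le_mul_of_nonneg_left (pow_le_pow_left₀ hpq hm 2)
      (by nlinarith [norm_nonneg (mobius a z)] : 0 ≤ 1 - ‖mobius a z‖ ^ 2)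
    nlinarith
  have hsub := (abs_le_of_sq_le_sq' hsq (by positivity)).2
  have ht0 : 0 ≤ t := (norm_nonneg _).trans ht
  have hc0 : 0 ≤ c := hp.trans hac
  rw [le_div_iff₀ (by positivity)]
  nlinarith [mul_le_mul_of_nonneg_right ht hpq, mul_nonneg (sub_nonneg.mpr hac)
    (by nlinarith : 0 ≤ 1 - t * ‖z‖)]

lemma norm_sub_le_two_mul_norm_mobius {a z : ℂ} (ha : ‖a‖ < 1) (hz : ‖z‖ < 1) :
    ‖a - z‖ ≤ 2 * ‖mobius a z‖ := by
  have hd := one_sub_conj_mul_ne_zero ha hz.le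
  have hm : ‖1 - conj a * z‖ ≤ 2 := by
    have := norm_one_sub_conj_mul_le a z
    nlinarith [norm_nonneg a, norm_nonneg z]
  calc ‖a - z‖ = ‖mobius a z‖ * ‖1 - conj a * z‖ := by
        rw [mobius, norm_div, div_mul_cancel₀ _ (norm_ne_zero_iff.mpr hd)]
    _ ≤ ‖mobius a z‖ * 2 := by gcongr
    _ = 2 * ‖mobius a z‖ := mul_comm _ _

def mobiusConj (F : ℂ → ℂ) (b : ℂ) : ℂ → ℂ := fun u => mobius (F b) (F (mobius b u))

section SelfMap

variable {F : ℂ → ℂ} {b : ℂ}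

lemma mapsTo_mobiusConj (hF : MapsTo F 𝔻 𝔻) (hb : b ∈ 𝔻) : MapsTo (mobiusConj F b) 𝔻 𝔻 :=
  (mapsTo_mobius (by simpa using hF hb)).comp (hF.comp (mapsTo_mobius (by simpa using hb)))

lemma differentiableOn_mobiusConj (hFd : DifferentiableOn ℂ F 𝔻) (hF : MapsTo F 𝔻 𝔻)
    (hb : b ∈ 𝔻) : DifferentiableOn ℂ (mobiusConj F b) 𝔻 :=
  (differentiableOn_mobius (by simpa using hF hb)).comp
    (hFd.comp (differentiableOn_mobius (by simpa using hb)) (mapsTo_mobius (by simpa using hb)))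
    (hF.comp (mapsTo_mobius (by simpa using hb)))

@[simp] lemma mobiusConj_zero : mobiusConj F b 0 = 0 := by simp [mobiusConj]

lemma mobiusConj_mobius (hb : b ∈ 𝔻) {a : ℂ} (ha : a ∈ 𝔻) :
    mobiusConj F b (mobius b a) = mobius (F b) (F a) := by
  rw [mobiusConj, mobius_mobius (by simpa using hb) (by simpa using ha)]

lemma norm_deriv_mobiusConj_zero (hFd : DifferentiableOn ℂ F 𝔻) (hF : MapsTo F 𝔻 𝔻)
    (hb : b ∈ 𝔻) :
    ‖deriv (mobiusConj F b) 0‖ = ‖deriv F b‖ * (1 - ‖b‖ ^ 2) / (1 - ‖F b‖ ^ 2) := by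
  have hb' : ‖b‖ < 1 := by simpa using hb
  have hFb : ‖F b‖ < 1 := by simpa using hF hb
  have hinner : HasDerivAt (mobius b) (normSq b - 1) 0 := by
    simpa using hasDerivAt_mobius b (z := 0) (by simp)
  have hF' : HasDerivAt F (deriv F b) (mobius b 0) := by
    rw [mobius_zero]
    exact (hFd.differentiableAt (isOpen_ball.mem_nhds hb)).hasDerivAt
  have houter : HasDerivAt (mobius (F b)) ((normSq (F b) - 1) / (1 - conj (F b) * F b) ^ 2)
      (F (mobius b 0)) := by
    rw [mobius_zero]
    exact hasDerivAt_mobius (F b) (one_sub_conj_mul_ne_zero hFb hFb.le)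
  have hconj : 1 - conj (F b) * F b = ((1 - ‖F b‖ ^ 2 : ℝ) : ℂ) := by
    rw [mul_comm, mul_conj, normSq_eq_norm_sq]; push_cast; ring
  rw [show mobiusConj F b = mobius (F b) ∘ F ∘ mobius b from rfl,
    (houter.comp 0 (hF'.comp 0 hinner)).deriv, hconj]
  have hpos : ∀ {x : ℂ}, ‖x‖ < 1 → 0 < 1 - ‖x‖ ^ 2 := fun {x} hx => by nlinarith [norm_nonneg x]
  have hsub : ∀ x : ℂ, (normSq x : ℂ) - 1 = -((1 - ‖x‖ ^ 2 : ℝ) : ℂ) := fun x => by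
    rw [normSq_eq_norm_sq]; push_cast; ring
  rw [hsub, hsub, norm_mul, norm_div, norm_mul, norm_neg, norm_neg, norm_pow, norm_real, norm_real,
    Real.norm_of_nonneg (hpos hFb).le, Real.norm_of_nonneg (hpos hb').le]
  field_simp

lemma mapsTo_ball_of_norm_le_one {Q : ℂ → ℂ} (hQd : DifferentiableOn ℂ Q 𝔻)
    (hQ : ∀ u ∈ 𝔻, ‖Q u‖ ≤ 1) (hQ0 : ‖Q 0‖ < 1) : MapsTo Q 𝔻 𝔻 := by
  intro u hu
  rw [mem_ball_zero_iff]
  by_contra! h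
  have hmax : IsMaxOn (norm ∘ Q) 𝔻 u := fun v hv => (hQ v hv).trans h
  have := Complex.norm_eqOn_of_isPreconnected_of_isMaxOn (convex_ball _ _).isPreconnected
    isOpen_ball hQd hu hmax (mem_ball_self one_pos)
  simp only [Function.comp_apply, Function.const_apply] at this
  linarith

lemma norm_le_mul_norm_of_norm_deriv_le {G : ℂ → ℂ} (hGd : DifferentiableOn ℂ G 𝔻)
    (hG : MapsTo G 𝔻 𝔻) (hG0 : G 0 = 0) {c t : ℝ} (hc : ‖deriv G 0‖ ≤ c) (hc1 : c < 1)
    {u : ℂ} (hu : u ∈ 𝔻) (hut : ‖u‖ ≤ t) (ht1 : t < 1) :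
    ‖G u‖ ≤ (c + t) / (1 + c * t) * ‖u‖ := by
  have hG' : MapsTo G 𝔻 (closedBall (G 0) 1) := by
    rw [hG0]; exact hG.mono_right ball_subset_closedBall
  set Q := dslope G 0
  have hQd : DifferentiableOn ℂ Q 𝔻 :=
    (differentiableOn_dslope (isOpen_ball.mem_nhds (mem_ball_self one_pos))).mpr hGd
  have hQ0 : ‖Q 0‖ ≤ c := by rwa [show Q 0 = deriv G 0 from dslope_same G 0]
  have hQ : MapsTo Q 𝔻 𝔻 := mapsTo_ball_of_norm_le_one hQd
    (fun v hv => by simpa using Complex.norm_dslope_le_div_of_mapsTo_ball hGd hG' hv)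
    (hQ0.trans_lt hc1)
  have hQ0' : ‖Q 0‖ < 1 := by simpa using hQ (mem_ball_self one_pos)
  have hρ : ‖mobius (Q 0) (Q u)‖ ≤ ‖u‖ :=
    Complex.norm_le_norm_of_mapsTo_ball ((differentiableOn_mobius hQ0').comp hQd hQ)
      (((mapsTo_mobius hQ0').comp hQ).mono_right ball_subset_closedBall)
      (mobius_self _) (by simpa using hu)
  have hQu := norm_le_of_norm_mobius_le hQ0' (by simpa using hQ hu) hQ0 (hρ.trans hut) ht1
  have hGu : u * Q u = G u := by simpa [hG0] using sub_smul_dslope G 0 u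
  calc ‖G u‖ = ‖u‖ * ‖Q u‖ := by rw [← hGu, norm_mul]
    _ ≤ ‖u‖ * ((c + t) / (1 + c * t)) := by gcongr
    _ = (c + t) / (1 + c * t) * ‖u‖ := mul_comm _ _

lemma surjOn_of_norm_deriv_eq_one {G : ℂ → ℂ} (hGd : DifferentiableOn ℂ G 𝔻)
    (hG : MapsTo G 𝔻 𝔻) (hG0 : G 0 = 0) (h1 : ‖deriv G 0‖ = 1) : SurjOn G 𝔻 𝔻 := by
  have hG' : MapsTo G 𝔻 (closedBall (G 0) 1) := by
    rw [hG0]; exact hG.mono_right ball_subset_closedBall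
  obtain ⟨C, hC, hrot⟩ := Complex.affine_of_mapsTo_ball_of_exists_norm_dslope_eq_div' hGd hG'
    ⟨0, mem_ball_self one_pos, by rw [dslope_same, h1, div_one]⟩
  have hC0 : C ≠ 0 := by rintro rfl; norm_num at hC
  intro y hy
  have hyC : y / C ∈ 𝔻 := by simpa [norm_div, hC] using hy
  refine ⟨y / C, hyC, ?_⟩
  rw [hrot hyC]
  simp only [hG0, sub_zero, smul_eq_mul, zero_add]
  exact div_mul_cancel₀ y hC0

lemma norm_deriv_mul_lt_of_not_surjOn {F : ℂ → ℂ} (hFd : DifferentiableOn ℂ F 𝔻)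
    (hF : MapsTo F 𝔻 𝔻) (hsurj : ¬ SurjOn F 𝔻 𝔻) {b : ℂ} (hb : b ∈ 𝔻) :
    ‖deriv F b‖ * (1 - ‖b‖ ^ 2) < 1 - ‖F b‖ ^ 2 := by
  have hFb : ‖F b‖ < 1 := by simpa using hF hb
  have hGd := differentiableOn_mobiusConj hFd hF hb
  have hG := mapsTo_mobiusConj hF hb
  have hle : ‖deriv (mobiusConj F b) 0‖ ≤ 1 :=
    Complex.norm_deriv_le_one_of_mapsTo_ball hGd
      (by rw [mobiusConj_zero]; exact hG.mono_right ball_subset_closedBall) one_pos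
  have hlt : ‖deriv (mobiusConj F b) 0‖ < 1 := by
    refine hle.lt_of_ne fun h1 => hsurj fun y hy => ?_
    obtain ⟨u, hu, hGu⟩ := surjOn_of_norm_deriv_eq_one hGd hG mobiusConj_zero h1
      (mapsTo_mobius hFb (x := y) hy)
    refine ⟨mobius b u, mapsTo_mobius (by simpa using hb) hu, ?_⟩
    calc F (mobius b u)
        = mobius (F b) (mobius (F b) (F (mobius b u))) :=
          (mobius_mobius hFb (by simpa using hF (mapsTo_mobius (by simpa using hb) hu))).symm
      _ = y := by rw [← mobiusConj, hGu, mobius_mobius hFb (by simpa using hy)]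
  rw [norm_deriv_mobiusConj_zero hFd hF hb, div_lt_one (by nlinarith [norm_nonneg (F b)])] at hlt
  exact hlt

lemma norm_mobius_le_mul_of_norm_deriv_le {F : ℂ → ℂ} (hFd : DifferentiableOn ℂ F 𝔻)
    (hF : MapsTo F 𝔻 𝔻) {r c : ℝ} (hr : r < 1) (hc : c < 1)
    (hder : ∀ b ∈ closedBall (0 : ℂ) r, ‖deriv F b‖ * (1 - ‖b‖ ^ 2) ≤ c * (1 - ‖F b‖ ^ 2))
    {a b : ℂ} (ha : a ∈ closedBall 0 r) (hb : b ∈ closedBall 0 r) :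
    ‖mobius (F b) (F a)‖ ≤
      (c + 2 * r / (1 + r ^ 2)) / (1 + c * (2 * r / (1 + r ^ 2))) * ‖mobius b a‖ := by
  rw [mem_closedBall_zero_iff] at ha hb
  have ha1 := ha.trans_lt hr
  have hb1 := hb.trans_lt hr
  have hb' : b ∈ 𝔻 := mem_ball_zero_iff.mpr hb1
  have hFb : ‖F b‖ < 1 := by simpa using hF hb'
  have hderiv : ‖deriv (mobiusConj F b) 0‖ ≤ c := by
    rw [norm_deriv_mobiusConj_zero hFd hF hb', div_le_iff₀ (by nlinarith [norm_nonneg (F b)])]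
    exact hder b (mem_closedBall_zero_iff.mpr hb)
  have ht1 : 2 * r / (1 + r ^ 2) < 1 := by
    rw [div_lt_one (by positivity)]; nlinarith [sq_nonneg (1 - r)]
  rw [← mobiusConj_mobius hb' (mem_ball_zero_iff.mpr ha1)]
  exact norm_le_mul_norm_of_norm_deriv_le (differentiableOn_mobiusConj hFd hF hb')
    (mapsTo_mobiusConj hF hb') mobiusConj_zero hderiv hc
    (by simpa using norm_mobius_lt_one hb1 ha1) (norm_mobius_le_of_norm_le hb ha hr) ht1

end SelfMap

lemma exists_lt_forall_le_of_isCompact {α : Type*} [TopologicalSpace α] {K : Set α}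
    (hK : IsCompact K) {f : α → ℝ} (hf : ContinuousOn f K) {a : ℝ} (h : ∀ x ∈ K, f x < a) :
    ∃ c < a, ∀ x ∈ K, f x ≤ c := by
  rcases K.eq_empty_or_nonempty with rfl | hne
  · exact ⟨a - 1, by linarith, by simp⟩
  · obtain ⟨x, hx, hmax⟩ := hK.exists_isMaxOn hne hf
    exact ⟨f x, h x hx, hmax⟩

section Family

variable {T : ℂ → ℂ → ℂ}

lemma exists_norm_deriv_mul_le (hTd : ∀ z ∈ 𝔻, DifferentiableOn ℂ (T z) 𝔻)
    (hT : ∀ z ∈ 𝔻, MapsTo (T z) 𝔻 𝔻) (hTs : ∀ z ∈ 𝔻, ¬ SurjOn (T z) 𝔻 𝔻)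
    (hcont : ContinuousOn (fun p : ℂ × ℂ => T p.1 p.2) (𝔻 ×ˢ 𝔻))
    (hcont' : ContinuousOn (fun p : ℂ × ℂ => deriv (T p.1) p.2) (𝔻 ×ˢ 𝔻)) {r : ℝ} (hr : r < 1) :
    ∃ c < 1, ∀ z ∈ closedBall (0 : ℂ) r, ∀ b ∈ closedBall (0 : ℂ) r,
      ‖deriv (T z) b‖ * (1 - ‖b‖ ^ 2) ≤ c * (1 - ‖T z b‖ ^ 2) := by
  set K := closedBall (0 : ℂ) r ×ˢ closedBall (0 : ℂ) r
  have hK : K ⊆ 𝔻 ×ˢ 𝔻 := prod_mono (closedBall_subset_ball hr) (closedBall_subset_ball hr)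
  have hpos : ∀ p ∈ K, 0 < 1 - ‖T p.1 p.2‖ ^ 2 := fun p hp => by
    have := mem_ball_zero_iff.mp (hT p.1 (hK hp).1 (hK hp).2)
    nlinarith [norm_nonneg (T p.1 p.2)]
  obtain ⟨c, hc1, hc⟩ := exists_lt_forall_le_of_isCompact
    (f := fun p : ℂ × ℂ => ‖deriv (T p.1) p.2‖ * (1 - ‖p.2‖ ^ 2) / (1 - ‖T p.1 p.2‖ ^ 2))
    ((isCompact_closedBall _ _).prod (isCompact_closedBall _ _))
    (((hcont'.mono hK).norm.mul (continuous_const.sub (continuous_snd.norm.pow 2)).continuousOn).div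
      (continuousOn_const.sub ((hcont.mono hK).norm.pow 2)) fun p hp => (hpos p hp).ne')
    fun p hp => (div_lt_one (hpos p hp)).mpr <| norm_deriv_mul_lt_of_not_surjOn
      (hTd p.1 (hK hp).1) (hT p.1 (hK hp).1) (hTs p.1 (hK hp).1) (hK hp).2
  exact ⟨c, hc1, fun z hz b hb => (div_le_iff₀ (hpos (z, b) ⟨hz, hb⟩)).mp (hc (z, b) ⟨hz, hb⟩)⟩

def ContractsOnClosedBall (T : ℂ → ℂ → ℂ) (r κ : ℝ) : Prop :=
  ∀ z ∈ closedBall (0 : ℂ) r, ∀ a ∈ closedBall (0 : ℂ) r, ∀ b ∈ closedBall (0 : ℂ) r,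
    ‖mobius (T z b) (T z a)‖ ≤ κ * ‖mobius b a‖

lemma exists_contractsOnClosedBall (hTd : ∀ z ∈ 𝔻, DifferentiableOn ℂ (T z) 𝔻)
    (hT : ∀ z ∈ 𝔻, MapsTo (T z) 𝔻 𝔻) (hTs : ∀ z ∈ 𝔻, ¬ SurjOn (T z) 𝔻 𝔻)
    (hcont : ContinuousOn (fun p : ℂ × ℂ => T p.1 p.2) (𝔻 ×ˢ 𝔻))
    (hcont' : ContinuousOn (fun p : ℂ × ℂ => deriv (T p.1) p.2) (𝔻 ×ˢ 𝔻)) {r : ℝ}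
    (hr0 : 0 ≤ r) (hr : r < 1) :
    ∃ κ, 0 ≤ κ ∧ κ < 1 ∧ ContractsOnClosedBall T r κ := by
  obtain ⟨c, hc1, hc⟩ := exists_norm_deriv_mul_le hTd hT hTs hcont hcont' hr
  set c' := max c 0
  set t := 2 * r / (1 + r ^ 2)
  have hc'0 : 0 ≤ c' := le_max_right _ _
  have hc'1 : c' < 1 := max_lt hc1 one_pos
  have ht0 : 0 ≤ t := by positivity
  have ht1 : t < 1 := by rw [div_lt_one (by positivity)]; nlinarith [sq_nonneg (1 - r)]
  refine ⟨(c' + t) / (1 + c' * t), by positivity,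
    (div_lt_one (by positivity)).mpr (by nlinarith [mul_pos (sub_pos.mpr hc'1) (sub_pos.mpr ht1)]),
    fun z hz a ha b hb => ?_⟩
  have hz' : z ∈ 𝔻 := closedBall_subset_ball hr hz
  refine norm_mobius_le_mul_of_norm_deriv_le (hTd z hz') (hT z hz') hr hc'1 (fun b hb => ?_) ha hb
  have := mem_ball_zero_iff.mp (hT z hz' (closedBall_subset_ball hr hb))
  exact (hc z hz b hb).trans
    (mul_le_mul_of_nonneg_right (le_max_left _ _) (by nlinarith [norm_nonneg (T z b)]))

def picardIterate (T : ℂ → ℂ → ℂ) : ℕ → ℂ → ℂ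
  | 0 => fun _ => 0
  | k + 1 => fun z => T z (picardIterate T k z)

lemma picardIterate_succ_apply (k : ℕ) (z : ℂ) :
    picardIterate T (k + 1) z = T z (picardIterate T k z) := rfl

lemma picardIterate_apply_zero (h00 : T 0 0 = 0) (k : ℕ) : picardIterate T k 0 = 0 := by
  induction k with
  | zero => rfl
  | succ k ih => rw [picardIterate_succ_apply, ih, h00]

lemma picardIterate_selfMap (hT : ∀ z ∈ 𝔻, MapsTo (T z) 𝔻 𝔻)
    (hcomp : ∀ g, DifferentiableOn ℂ g 𝔻 → MapsTo g 𝔻 𝔻 →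
      DifferentiableOn ℂ (fun z => T z (g z)) 𝔻) (k : ℕ) :
    DifferentiableOn ℂ (picardIterate T k) 𝔻 ∧ MapsTo (picardIterate T k) 𝔻 𝔻 := by
  induction k with
  | zero => exact ⟨differentiableOn_const 0, fun _ _ => mem_ball_self one_pos⟩
  | succ k ih => exact ⟨hcomp _ ih.1 ih.2, fun z hz => hT z hz (ih.2 hz)⟩

lemma norm_picardIterate_le (hT : ∀ z ∈ 𝔻, MapsTo (T z) 𝔻 𝔻)
    (hcomp : ∀ g, DifferentiableOn ℂ g 𝔻 → MapsTo g 𝔻 𝔻 →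
      DifferentiableOn ℂ (fun z => T z (g z)) 𝔻) (h00 : T 0 0 = 0) (k : ℕ) {z : ℂ} (hz : z ∈ 𝔻) :
    ‖picardIterate T k z‖ ≤ ‖z‖ :=
  Complex.norm_le_norm_of_mapsTo_ball (picardIterate_selfMap hT hcomp k).1
    ((picardIterate_selfMap hT hcomp k).2.mono_right ball_subset_closedBall)
    (picardIterate_apply_zero h00 k) (mem_ball_zero_iff.mp hz)

lemma norm_sub_picardIterate_le (hT : ∀ z ∈ 𝔻, MapsTo (T z) 𝔻 𝔻)
    (hcomp : ∀ g, DifferentiableOn ℂ g 𝔻 → MapsTo g 𝔻 𝔻 →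
      DifferentiableOn ℂ (fun z => T z (g z)) 𝔻) (h00 : T 0 0 = 0) {r κ : ℝ} (hr : r < 1)
    (hκ0 : 0 ≤ κ) (hκ : ContractsOnClosedBall T r κ) {z : ℂ} (hz : z ∈ closedBall (0 : ℂ) r)
    (k : ℕ) : ‖picardIterate T (k + 1) z - picardIterate T k z‖ ≤ 2 * κ ^ k := by
  have hmem : ∀ k, picardIterate T k z ∈ closedBall (0 : ℂ) r := fun k =>
    mem_closedBall_zero_iff.mpr ((norm_picardIterate_le hT hcomp h00 k
      (closedBall_subset_ball hr hz)).trans (mem_closedBall_zero_iff.mp hz))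
  have hnorm : ∀ k, ‖picardIterate T k z‖ < 1 := fun k =>
    mem_ball_zero_iff.mp (closedBall_subset_ball hr (hmem k))
  have hρ : ∀ k, ‖mobius (picardIterate T k z) (picardIterate T (k + 1) z)‖ ≤ κ ^ k := by
    intro k
    induction k with
    | zero => simpa [show picardIterate T 0 z = 0 from rfl] using (hnorm 1).le
    | succ k ih =>
      calc ‖mobius (picardIterate T (k + 1) z) (picardIterate T (k + 2) z)‖
          ≤ κ * ‖mobius (picardIterate T k z) (picardIterate T (k + 1) z)‖ :=
            hκ z hz _ (hmem (k + 1)) _ (hmem k)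
        _ ≤ κ ^ (k + 1) := by rw [pow_succ']; gcongr
  rw [norm_sub_rev]
  exact (norm_sub_le_two_mul_norm_mobius (hnorm k) (hnorm (k + 1))).trans (by gcongr; exact hρ k)

lemma exists_tendstoLocallyUniformlyOn_picardIterate (hT : ∀ z ∈ 𝔻, MapsTo (T z) 𝔻 𝔻)
    (hcomp : ∀ g, DifferentiableOn ℂ g 𝔻 → MapsTo g 𝔻 𝔻 →
      DifferentiableOn ℂ (fun z => T z (g z)) 𝔻) (h00 : T 0 0 = 0)
    (hcontr : ∀ r : ℝ, 0 ≤ r → r < 1 → ∃ κ, 0 ≤ κ ∧ κ < 1 ∧ ContractsOnClosedBall T r κ) :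
    ∃ ω : ℂ → ℂ, TendstoLocallyUniformlyOn (picardIterate T) ω atTop 𝔻 := by
  -- the iterates are the partial sums of a telescoping series, which the Weierstrass M-test
  -- controls on each `closedBall 0 r` through the bound `2 * κ ^ k`
  refine ⟨fun z => ∑' k, (picardIterate T (k + 1) z - picardIterate T k z),
    tendstoLocallyUniformlyOn_of_forall_exists_nhds fun z hz => ?_⟩
  have hz1 := mem_ball_zero_iff.mp hz
  obtain ⟨κ, hκ0, hκ1, hκ⟩ := hcontr ((‖z‖ + 1) / 2) (by positivity) (by linarith)
  refine ⟨closedBall 0 ((‖z‖ + 1) / 2), mem_nhdsWithin_of_mem_nhds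
    (closedBall_mem_nhds_of_mem (mem_ball_zero_iff.mpr (by linarith))),
    (tendstoUniformlyOn_tsum_nat ((summable_geometric_of_lt_one hκ0 hκ1).mul_left 2)
      fun k w hw => norm_sub_picardIterate_le hT hcomp h00 (by linarith) hκ0 hκ hw k).congr
      (Eventually.of_forall fun N w _ => ?_)⟩
  simp only [Finset.sum_range_sub (fun k => picardIterate T k w)]
  exact sub_zero _

theorem exists_fixedPoint_of_contraction (hT : ∀ z ∈ 𝔻, MapsTo (T z) 𝔻 𝔻)
    (hTc : ∀ z ∈ 𝔻, ContinuousOn (T z) 𝔻)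
    (hcomp : ∀ g, DifferentiableOn ℂ g 𝔻 → MapsTo g 𝔻 𝔻 →
      DifferentiableOn ℂ (fun z => T z (g z)) 𝔻) (h00 : T 0 0 = 0)
    (hcontr : ∀ r : ℝ, 0 ≤ r → r < 1 → ∃ κ, 0 ≤ κ ∧ κ < 1 ∧ ContractsOnClosedBall T r κ) :
    ∃ ω : ℂ → ℂ, DifferentiableOn ℂ ω 𝔻 ∧ MapsTo ω 𝔻 𝔻 ∧ ω 0 = 0 ∧
      ∀ z ∈ 𝔻, T z (ω z) = ω z := by
  obtain ⟨ω, hloc⟩ := exists_tendstoLocallyUniformlyOn_picardIterate hT hcomp h00 hcontr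
  have hlim : ∀ z ∈ 𝔻, Tendsto (fun k => picardIterate T k z) atTop (𝓝 (ω z)) :=
    fun z hz => hloc.tendsto_at hz
  have hωle : ∀ z ∈ 𝔻, ‖ω z‖ ≤ ‖z‖ := fun z hz => le_of_tendsto (hlim z hz).norm
    (Eventually.of_forall fun k => norm_picardIterate_le hT hcomp h00 k hz)
  have hω : MapsTo ω 𝔻 𝔻 := fun z hz =>
    mem_ball_zero_iff.mpr ((hωle z hz).trans_lt (mem_ball_zero_iff.mp hz))
  refine ⟨ω, hloc.differentiableOn (Eventually.of_forall fun k =>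
    (picardIterate_selfMap hT hcomp k).1) isOpen_ball, hω,
    norm_le_zero_iff.mp (by simpa using hωle 0 (mem_ball_self one_pos)), fun z hz => ?_⟩
  have hTω : Tendsto (fun k => T z (picardIterate T k z)) atTop (𝓝 (T z (ω z))) :=
    ((hTc z hz).continuousAt (isOpen_ball.mem_nhds (hω hz))).tendsto.comp (hlim z hz)
  exact tendsto_nhds_unique hTω ((hlim z hz).comp (tendsto_add_atTop_nat 1))

theorem exists_fixedPoint_of_not_surjOn (hTd : ∀ z ∈ 𝔻, DifferentiableOn ℂ (T z) 𝔻)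
    (hT : ∀ z ∈ 𝔻, MapsTo (T z) 𝔻 𝔻) (hTs : ∀ z ∈ 𝔻, ¬ SurjOn (T z) 𝔻 𝔻)
    (hcont : ContinuousOn (fun p : ℂ × ℂ => T p.1 p.2) (𝔻 ×ˢ 𝔻))
    (hcont' : ContinuousOn (fun p : ℂ × ℂ => deriv (T p.1) p.2) (𝔻 ×ˢ 𝔻))
    (hcomp : ∀ g, DifferentiableOn ℂ g 𝔻 → MapsTo g 𝔻 𝔻 →
      DifferentiableOn ℂ (fun z => T z (g z)) 𝔻) (h00 : T 0 0 = 0) :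
    ∃ ω : ℂ → ℂ, DifferentiableOn ℂ ω 𝔻 ∧ MapsTo ω 𝔻 𝔻 ∧ ω 0 = 0 ∧
      ∀ z ∈ 𝔻, T z (ω z) = ω z :=
  exists_fixedPoint_of_contraction hT (fun z hz => (hTd z hz).continuousOn) hcomp h00
    fun _ hr0 hr => exists_contractsOnClosedBall hTd hT hTs hcont hcont' hr0 hr

end Family

/-- The image of `ball 1 1` under `log`, written as the strict hypograph of `y ↦ log (2 cos y)`. -/
def logDisc : Set ℂ :=
  {w | w.im ∈ Ioo (-(π / 2)) (π / 2) ∧ w.re < Real.log (2 * Real.cos w.im)}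

lemma concaveOn_log_two_mul_cos :
    ConcaveOn ℝ (Ioo (-(π / 2)) (π / 2)) fun y => Real.log (2 * Real.cos y) := by
  have hcos : ConcaveOn ℝ (Ioo (-(π / 2)) (π / 2)) Real.cos :=
    strictConcaveOn_cos_Icc.concaveOn.subset Ioo_subset_Icc_self (convex_Ioo _ _)
  refine ⟨convex_Ioo _ _, fun x hx y hy a b ha hb hab => ?_⟩
  have hx' := Real.cos_pos_of_mem_Ioo hx
  have hy' := Real.cos_pos_of_mem_Ioo hy
  calc a • Real.log (2 * Real.cos x) + b • Real.log (2 * Real.cos y)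
      ≤ Real.log (a • (2 * Real.cos x) + b • (2 * Real.cos y)) :=
        strictConcaveOn_log_Ioi.concaveOn.2 (by simpa using hx') (by simpa using hy') ha hb hab
    _ ≤ Real.log (2 * Real.cos (a • x + b • y)) := by
        have h := hcos.2 hx hy ha hb hab
        simp only [smul_eq_mul] at h ⊢
        gcongr
        · nlinarith [mul_le_mul_of_nonneg_left (min_le_left (Real.cos x) (Real.cos y)) ha,
            mul_le_mul_of_nonneg_left (min_le_right (Real.cos x) (Real.cos y)) hb, lt_min hx' hy']
        · linarith

lemma convex_logDisc : Convex ℝ logDisc :=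
  concaveOn_log_two_mul_cos.convex_strict_hypograph.linear_preimage (imLm.prod reLm)

lemma log_mem_logDisc {u : ℂ} (hu : u ∈ ball (1 : ℂ) 1) : log u ∈ logDisc := by
  rw [mem_ball, dist_eq_norm] at hu
  have hu0 : u ≠ 0 := by rintro rfl; simp at hu
  have hsq : ‖u‖ ^ 2 < 2 * u.re := by
    have := (sq_lt_one_iff₀ (norm_nonneg _)).mpr hu
    rw [← normSq_eq_norm_sq, normSq_apply] at this ⊢
    simp only [sub_re, sub_im, one_re, one_im] at this
    nlinarith
  have hre : 0 < u.re := by nlinarith [norm_nonneg u]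
  have hnorm : 0 < ‖u‖ := norm_pos_iff.mpr hu0
  refine ⟨?_, ?_⟩
  · rw [log_im, mem_Ioo, ← abs_lt]
    exact abs_arg_lt_pi_div_two_iff.mpr (Or.inl hre)
  · rw [log_re, log_im, cos_arg hu0]
    apply Real.log_lt_log hnorm
    rw [mul_div_assoc', lt_div_iff₀ hnorm]
    nlinarith

lemma exp_mem_ball_of_mem_logDisc {w : ℂ} (hw : w ∈ logDisc) : exp w ∈ ball (1 : ℂ) 1 := by
  obtain ⟨him, hre⟩ := hw
  have hcos := Real.cos_pos_of_mem_Ioo him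
  have hlt : Real.exp w.re < 2 * Real.cos w.im := by
    simpa [Real.exp_log (by positivity : 0 < 2 * Real.cos w.im)] using Real.exp_lt_exp.mpr hre
  rw [mem_ball, dist_eq_norm, ← sq_lt_one_iff₀ (norm_nonneg _), ← normSq_eq_norm_sq, normSq_apply]
  simp only [sub_re, sub_im, one_re, one_im, exp_re, exp_im]
  have key : (Real.exp w.re * Real.cos w.im - 1) * (Real.exp w.re * Real.cos w.im - 1) +
      (Real.exp w.re * Real.sin w.im - 0) * (Real.exp w.re * Real.sin w.im - 0) =
      1 - Real.exp w.re * (2 * Real.cos w.im - Real.exp w.re) := by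
    linear_combination Real.exp w.re ^ 2 * Real.sin_sq_add_cos_sq w.im
  rw [key]
  linarith [mul_pos (Real.exp_pos w.re) (sub_pos.mpr hlt)]

lemma one_sub_mem_ball_one {x : ℂ} (hx : ‖x‖ < 1) : 1 - x ∈ ball (1 : ℂ) 1 := by
  rwa [mem_ball, dist_eq_norm, sub_sub_cancel_left, norm_neg]

lemma norm_mul_conj_lt_one {w ζ : ℂ} (hw : w ∈ 𝔻) (hζ : ‖ζ‖ ≤ 1) : ‖w * conj ζ‖ < 1 := by
  rw [norm_mul, norm_conj]
  nlinarith [norm_nonneg w, norm_nonneg ζ, mem_ball_zero_iff.mp hw]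

lemma one_sub_mem_slitPlane {x : ℂ} (hx : ‖x‖ < 1) : 1 - x ∈ slitPlane := by
  rw [mem_slitPlane_iff, sub_re, one_re, sub_pos]
  exact Or.inl ((re_le_norm x).trans_lt hx)

section SubordinationMap

variable {ι : Type*} [Fintype ι] {β : ℝ} {ζ : ι → ℂ} {σ : ι → ℝ}

def weightedLog (β : ℝ) (ζ : ι → ℂ) (σ : ι → ℝ) (z w : ℂ) : ℂ :=
  β • log (1 - z) + (1 - β) • ∑ j, σ j • log (1 - w * conj (ζ j))

def subordinationMap (β : ℝ) (ζ : ι → ℂ) (σ : ι → ℝ) (z w : ℂ) : ℂ :=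
  1 - exp (weightedLog β ζ σ z w)

lemma weightedLog_mem_logDisc (hβ0 : 0 ≤ β) (hβ1 : β ≤ 1) (hζ : ∀ j, ‖ζ j‖ ≤ 1)
    (hσ : ∀ j, 0 ≤ σ j) (hσ1 : ∑ j, σ j = 1) {z w : ℂ} (hz : z ∈ 𝔻) (hw : w ∈ 𝔻) :
    weightedLog β ζ σ z w ∈ logDisc :=
  convex_logDisc (log_mem_logDisc (one_sub_mem_ball_one (mem_ball_zero_iff.mp hz)))
    (convex_logDisc.sum_mem (fun j _ => hσ j) hσ1
      fun j _ => log_mem_logDisc (one_sub_mem_ball_one (norm_mul_conj_lt_one hw (hζ j))))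
    hβ0 (sub_nonneg.mpr hβ1) (add_sub_cancel β 1)

lemma mapsTo_subordinationMap (hβ0 : 0 ≤ β) (hβ1 : β ≤ 1) (hζ : ∀ j, ‖ζ j‖ ≤ 1)
    (hσ : ∀ j, 0 ≤ σ j) (hσ1 : ∑ j, σ j = 1) {z : ℂ} (hz : z ∈ 𝔻) :
    MapsTo (subordinationMap β ζ σ z) 𝔻 𝔻 := fun w hw => by
  have := exp_mem_ball_of_mem_logDisc (weightedLog_mem_logDisc hβ0 hβ1 hζ hσ hσ1 hz hw)
  rw [mem_ball, dist_eq_norm] at this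
  rwa [mem_ball_zero_iff, subordinationMap, norm_sub_rev]

lemma re_weightedLog_le (hβ1 : β ≤ 1) (hζ : ∀ j, ‖ζ j‖ ≤ 1) (hσ : ∀ j, 0 ≤ σ j)
    (hσ1 : ∑ j, σ j = 1) (z : ℂ) {w : ℂ} (hw : w ∈ 𝔻) :
    (weightedLog β ζ σ z w).re ≤ β * Real.log ‖1 - z‖ + (1 - β) * Real.log 2 := by
  have hlog : ∀ j, Real.log ‖1 - w * conj (ζ j)‖ ≤ Real.log 2 := fun j => by
    have h := norm_mul_conj_lt_one hw (hζ j)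
    apply Real.log_le_log (norm_pos_iff.mpr (slitPlane_ne_zero (one_sub_mem_slitPlane h)))
    linarith [norm_sub_le (1 : ℂ) (w * conj (ζ j)), norm_one (α := ℂ)]
  have hsum : ∑ j, σ j * Real.log ‖1 - w * conj (ζ j)‖ ≤ Real.log 2 := by
    calc ∑ j, σ j * Real.log ‖1 - w * conj (ζ j)‖ ≤ ∑ j, σ j * Real.log 2 :=
          Finset.sum_le_sum fun j _ => mul_le_mul_of_nonneg_left (hlog j) (hσ j)
      _ = Real.log 2 := by rw [← Finset.sum_mul, hσ1, one_mul]
  simp only [weightedLog, add_re, smul_re, re_sum, log_re, smul_eq_mul]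
  gcongr

lemma not_surjOn_subordinationMap (hβ0 : 0 < β) (hβ1 : β ≤ 1) (hζ : ∀ j, ‖ζ j‖ ≤ 1)
    (hσ : ∀ j, 0 ≤ σ j) (hσ1 : ∑ j, σ j = 1) {z : ℂ} (hz : z ∈ 𝔻) :
    ¬ SurjOn (subordinationMap β ζ σ z) 𝔻 𝔻 := by
  set M := Real.exp (β * Real.log ‖1 - z‖ + (1 - β) * Real.log 2)
  have hz1 := mem_ball_zero_iff.mp hz
  have hM : M < 2 := by
    have h1z : 0 < ‖1 - z‖ := norm_pos_iff.mpr (slitPlane_ne_zero (one_sub_mem_slitPlane hz1))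
    have h2 : Real.log ‖1 - z‖ < Real.log 2 :=
      Real.log_lt_log h1z (by linarith [norm_sub_le (1 : ℂ) z, norm_one (α := ℂ)])
    calc M < Real.exp (Real.log 2) := Real.exp_lt_exp.mpr (by nlinarith)
      _ = 2 := Real.exp_log two_pos
  -- `‖1 - T w‖ ≤ M < 2` for all `w`, so the real point `1 - s` with `M < s < 2` is omitted
  set s := (M + 2) / 2
  have hs0 : 0 < s := by positivity
  have hMs : M < s := by simp only [s]; linarith
  have hs2 : s < 2 := by simp only [s]; linarith
  intro hsurj
  obtain ⟨w, hw, hTw⟩ := hsurj (show ((1 - s : ℝ) : ℂ) ∈ 𝔻 by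
    rw [mem_ball_zero_iff, norm_real, Real.norm_eq_abs, abs_lt]; constructor <;> linarith)
  have hexp : exp (weightedLog β ζ σ z w) = ((s : ℝ) : ℂ) := by
    rw [subordinationMap] at hTw; push_cast at hTw; linear_combination -hTw
  have hle : ‖exp (weightedLog β ζ σ z w)‖ ≤ M := by
    rw [norm_exp]; exact Real.exp_le_exp.mpr (re_weightedLog_le hβ1 hζ hσ hσ1 z hw)
  rw [hexp, norm_real, Real.norm_of_nonneg hs0.le] at hle
  linarith

lemma hasDerivAt_subordinationMap (hζ : ∀ j, ‖ζ j‖ ≤ 1) (z : ℂ) {w : ℂ} (hw : w ∈ 𝔻) :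
    HasDerivAt (subordinationMap β ζ σ z)
      (exp (weightedLog β ζ σ z w) *
        ((1 - β) • ∑ j, σ j • (conj (ζ j) / (1 - w * conj (ζ j))))) w := by
  have hlog : ∀ j, HasDerivAt (fun v => log (1 - v * conj (ζ j)))
      (-(conj (ζ j) / (1 - w * conj (ζ j)))) w := fun j => by
    have h := (((hasDerivAt_id w).mul_const (conj (ζ j))).const_sub 1).clog
      (one_sub_mem_slitPlane (norm_mul_conj_lt_one hw (hζ j)))
    simpa [neg_div] using h
  have hL : HasDerivAt (weightedLog β ζ σ z)
      ((1 - β) • ∑ j, σ j • -(conj (ζ j) / (1 - w * conj (ζ j)))) w :=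
    ((HasDerivAt.fun_sum fun j _ => (hlog j).const_smul (σ j)).const_smul (1 - β)).const_add _
  refine (hL.cexp.const_sub 1).congr_deriv ?_
  simp only [smul_neg, Finset.sum_neg_distrib, mul_neg, neg_neg]

lemma continuousOn_weightedLog (hζ : ∀ j, ‖ζ j‖ ≤ 1) :
    ContinuousOn (fun p : ℂ × ℂ => weightedLog β ζ σ p.1 p.2) (𝔻 ×ˢ 𝔻) := by
  refine ((continuousOn_const.sub continuousOn_fst).clog fun p hp => ?_).const_smul β |>.add
    ((continuousOn_finsetSum _ fun j _ => ((continuousOn_const.sub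
      (continuousOn_snd.mul continuousOn_const)).clog fun p hp => ?_).const_smul (σ j)).const_smul
      (1 - β))
  · exact one_sub_mem_slitPlane (mem_ball_zero_iff.mp hp.1)
  · exact one_sub_mem_slitPlane (norm_mul_conj_lt_one hp.2 (hζ j))

lemma continuousOn_subordinationMap (hζ : ∀ j, ‖ζ j‖ ≤ 1) :
    ContinuousOn (fun p : ℂ × ℂ => subordinationMap β ζ σ p.1 p.2) (𝔻 ×ˢ 𝔻) :=
  continuousOn_const.sub (continuousOn_weightedLog hζ).cexp

lemma continuousOn_deriv_subordinationMap (hζ : ∀ j, ‖ζ j‖ ≤ 1) :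
    ContinuousOn (fun p : ℂ × ℂ => deriv (subordinationMap β ζ σ p.1) p.2) (𝔻 ×ˢ 𝔻) := by
  refine ContinuousOn.congr ?_ fun p hp => (hasDerivAt_subordinationMap hζ p.1 hp.2).deriv
  refine (continuousOn_weightedLog hζ).cexp.mul ((continuousOn_finsetSum _ fun j _ =>
    (continuousOn_const.div (continuousOn_const.sub (continuousOn_snd.mul continuousOn_const))
      fun p hp => ?_).const_smul (σ j)).const_smul (1 - β))
  exact slitPlane_ne_zero (one_sub_mem_slitPlane (norm_mul_conj_lt_one hp.2 (hζ j)))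

lemma differentiableOn_subordinationMap_comp (hζ : ∀ j, ‖ζ j‖ ≤ 1) {g : ℂ → ℂ}
    (hgd : DifferentiableOn ℂ g 𝔻) (hg : MapsTo g 𝔻 𝔻) :
    DifferentiableOn ℂ (fun z => subordinationMap β ζ σ z (g z)) 𝔻 := by
  refine (differentiableOn_const 1).sub (DifferentiableOn.cexp ?_)
  refine ((differentiableOn_const 1).sub differentiableOn_id |>.clog fun z hz => ?_).const_smul β
    |>.add ((DifferentiableOn.fun_sum fun j _ => (((differentiableOn_const 1).sub
      (hgd.mul_const _)).clog fun z hz => ?_).const_smul (σ j)).const_smul (1 - β))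
  · exact one_sub_mem_slitPlane (mem_ball_zero_iff.mp hz)
  · exact one_sub_mem_slitPlane (norm_mul_conj_lt_one (hg hz) (hζ j))

@[simp] lemma subordinationMap_zero_zero : subordinationMap β ζ σ 0 0 = 0 := by
  simp [subordinationMap, weightedLog]

lemma exp_real_smul_log {u : ℂ} (hu : u ≠ 0) (c : ℝ) : exp (c • log u) = u ^ (c : ℂ) := by
  rw [cpow_def_of_ne_zero hu, real_smul, mul_comm]

lemma one_sub_cpow_eq_of_subordinationMap_eq (hζ : ∀ j, ‖ζ j‖ ≤ 1) {z ω : ℂ} (hz : z ∈ 𝔻)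
    (hω : ω ∈ 𝔻) (hfix : subordinationMap β ζ σ z ω = ω) :
    (1 - z) ^ (β : ℂ) =
      (1 - ω) * ∏ j, (1 - ω * conj (ζ j)) ^ (-(((1 - β) * σ j : ℝ) : ℂ)) := by
  have hu : ∀ j, 1 - ω * conj (ζ j) ≠ 0 := fun j =>
    slitPlane_ne_zero (one_sub_mem_slitPlane (norm_mul_conj_lt_one hω (hζ j)))
  have h1z : 1 - z ≠ 0 := slitPlane_ne_zero (one_sub_mem_slitPlane (mem_ball_zero_iff.mp hz))
  have hexp : 1 - ω = (1 - z) ^ (β : ℂ) *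
      ∏ j, (1 - ω * conj (ζ j)) ^ (((1 - β) * σ j : ℝ) : ℂ) := by
    conv_lhs => rw [← hfix, subordinationMap, sub_sub_cancel, weightedLog, exp_add,
      Finset.smul_sum, exp_sum]
    simp only [smul_smul, exp_real_smul_log h1z, exp_real_smul_log (hu _)]
  rw [hexp, mul_assoc, ← Finset.prod_mul_distrib, Finset.prod_eq_one, mul_one]
  intro j _
  rw [cpow_neg, mul_inv_cancel₀ (by rw [cpow_def_of_ne_zero (hu j)]; exact exp_ne_zero _)]

end SubordinationMap

end Spirallike

end

open Spirallike in
theorem stmt17 (β : ℝ) (hβ0 : 0 < β) (hβ1 : β < 1)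
    (n : ℕ) (ζ : Fin n → ℂ) (hζ : ∀ j, ‖ζ j‖ = 1)
    (σ : Fin n → ℝ) (hσ : ∀ j, 0 ≤ σ j) (hσ1 : ∑ j, σ j = 1)
    (f : ℂ → ℂ)
    (hf : ∀ z ∈ ball (0 : ℂ) 1,
      f z = (1 - z) *
        ∏ j, (1 - z * (starRingEnd ℂ) (ζ j)) ^ (-(((1 - β) * σ j : ℝ) : ℂ))) :
    ∃ ω : ℂ → ℂ, DifferentiableOn ℂ ω (ball (0 : ℂ) 1) ∧ ω 0 = 0 ∧
      (∀ z ∈ ball (0 : ℂ) 1, ω z ∈ ball (0 : ℂ) 1) ∧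
      (∀ z ∈ ball (0 : ℂ) 1, (1 - z) ^ ((β : ℂ)) = f (ω z)) := by
  have hζ' : ∀ j, ‖ζ j‖ ≤ 1 := fun j => (hζ j).le
  obtain ⟨ω, hωd, hω, hω0, hfix⟩ := exists_fixedPoint_of_not_surjOn
    (T := subordinationMap β ζ σ)
    (fun z _ w hw => (hasDerivAt_subordinationMap hζ' z hw).differentiableAt.differentiableWithinAt)
    (fun _ hz => mapsTo_subordinationMap hβ0.le hβ1.le hζ' hσ hσ1 hz)
    (fun _ hz => not_surjOn_subordinationMap hβ0 hβ1.le hζ' hσ hσ1 hz)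
    (continuousOn_subordinationMap hζ') (continuousOn_deriv_subordinationMap hζ')
    (fun _ hgd hg => differentiableOn_subordinationMap_comp hζ' hgd hg) subordinationMap_zero_zero
  refine ⟨ω, hωd, hω0, hω, fun z hz => ?_⟩
  rw [hf _ (hω hz)]
  exact one_sub_cpow_eq_of_subordinationMap_eq hζ' hz (hω hz) (hfix z hz)
end
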